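/- arXiv:2108.00418 — 4 statements merged into one kernel-verified Lean document; each statement's English description precedes it below -/
import Mathlib

section
/- Let 𝒞 be a nonempty collection of compact subsets of the closed unit ball in ℝ^d that is closed under rescalings and closed under Hausdorff convergence, and let α ∈ 𝒜(𝒞) = {α ≥ 0 : H^α(K) = 0 for every K ∈ 𝒞}. Then there exists a constant C(α) such that for every K ∈ 𝒞 and every 0 < r ≤ 1, the minimal number N(K, r) of open balls of radius r needed to cover K satisfies N(K, r) · r^α ≤ C(α). -/
/-!
Covering numbers are bounded by the packing numbers `N(n)` of the whole class `𝒞` at the dyadic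
scales `2⁻ⁿ`, and it suffices to bound `N(n) 2^(-nα)` at its record scales `n` (those where it
is at least every earlier value). At such a scale, zooming in by closure under rescaling bounds
the points of a packing inside a ball `B(y, ρ)` by `1 + N(n) (4ρ)^α`. If the records were
unbounded, extremal sets at record scales would (by Blaschke selection) converge to some `L ∈ 𝒞`;
since `μH[α] L = 0`, `L` has a finite cover by balls with `∑ (4ρᵢ)^α ≤ 1/2`, which eventually
also covers the extremal sets and forces `N(n) ≤ 2 #F`, a contradiction.
-/

open MeasureTheory Metric Set Filter Topology
open scoped ENNReal

noncomputable section

/-- `coverNum K r` is the minimal number of open balls of radius `r` needed to cover `K`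
(for compact `K` such finite covers always exist). -/
def coverNum {X : Type*} [PseudoMetricSpace X] (K : Set X) (r : ℝ) : ℕ :=
  sInf {n : ℕ | ∃ s : Finset X, s.card = n ∧ K ⊆ ⋃ x ∈ s, Metric.ball x r}

section Packing

variable {X : Type*} [PseudoMetricSpace X]

theorem TotallyBounded.exists_card_le_of_pairwise_le_dist {S : Set X} (hS : TotallyBounded S)
    {ρ : ℝ} (hρ : 0 < ρ) :
    ∃ M : ℕ, ∀ s : Finset X, ↑s ⊆ S → (s : Set X).Pairwise (ρ ≤ dist · ·) → s.card ≤ M := by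
  obtain ⟨T, hT, hST⟩ := totallyBounded_iff.1 hS (ρ / 2) (half_pos hρ)
  refine ⟨hT.toFinset.card, fun s hsS hs => ?_⟩
  have hnet : ∀ p ∈ s, ∃ y ∈ T, dist p y < ρ / 2 := fun p hp => by
    simpa using hST (hsS hp)
  choose! f hfT hf using hnet
  refine Finset.card_le_card_of_injOn f (fun p hp => by simpa using hfT p hp) ?_
  intro p hp q hq hpq
  by_contra hne
  have : dist p q < ρ := by
    linarith [dist_triangle_right p q (f p), hf p hp, hpq ▸ hf q hq]
  exact (hs hp hq hne).not_gt this

theorem Finset.card_le_one_of_pairwise_le_dist {s : Finset X} {δ : ℝ}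
    (hs : (s : Set X).Pairwise (δ ≤ dist · ·)) (hdiam : ∀ p ∈ s, ∀ q ∈ s, dist p q < δ) :
    s.card ≤ 1 :=
  Finset.card_le_one.2 fun p hp q hq => by_contra fun hpq => (hs hp hq hpq).not_gt (hdiam p hp q hq)

/-- Junk value `0` when the sizes of `ρ`-separated sets are unbounded (e.g. for `ρ ≤ 0`). -/
def packingNum (𝒞 : Set (Set X)) (ρ : ℝ) : ℕ :=
  sSup {m | ∃ K ∈ 𝒞, ∃ s : Finset X, ↑s ⊆ K ∧ (s : Set X).Pairwise (ρ ≤ dist · ·) ∧ s.card = m}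

variable {𝒞 : Set (Set X)} {ρ : ℝ}

theorem bddAbove_packingNum_set (h𝒞 : TotallyBounded (⋃₀ 𝒞)) (hρ : 0 < ρ) :
    BddAbove {m | ∃ K ∈ 𝒞, ∃ s : Finset X, ↑s ⊆ K ∧
      (s : Set X).Pairwise (ρ ≤ dist · ·) ∧ s.card = m} := by
  obtain ⟨M, hM⟩ := h𝒞.exists_card_le_of_pairwise_le_dist hρ
  refine ⟨M, ?_⟩
  rintro _ ⟨K, hK, s, hsK, hs, rfl⟩
  exact hM s (hsK.trans (subset_sUnion_of_mem hK)) hs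

theorem card_le_packingNum (h𝒞 : TotallyBounded (⋃₀ 𝒞)) (hρ : 0 < ρ) {K : Set X} (hK : K ∈ 𝒞)
    {s : Finset X} (hsK : ↑s ⊆ K) (hs : (s : Set X).Pairwise (ρ ≤ dist · ·)) :
    s.card ≤ packingNum 𝒞 ρ :=
  le_csSup (bddAbove_packingNum_set h𝒞 hρ) ⟨K, hK, s, hsK, hs, rfl⟩

theorem exists_card_eq_packingNum (h𝒞 : TotallyBounded (⋃₀ 𝒞)) (hρ : 0 < ρ)
    (hpos : 0 < packingNum 𝒞 ρ) :
    ∃ K ∈ 𝒞, ∃ s : Finset X, ↑s ⊆ K ∧ (s : Set X).Pairwise (ρ ≤ dist · ·) ∧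
      s.card = packingNum 𝒞 ρ := by
  refine Nat.sSup_mem ?_ (bddAbove_packingNum_set h𝒞 hρ)
  by_contra hempty
  rw [packingNum, not_nonempty_iff_eq_empty.1 hempty, csSup_empty] at hpos
  exact hpos.false

/-- A maximal `ρ`-separated subset of `K` is a `ρ`-net of `K`. -/
theorem TotallyBounded.exists_pairwise_le_dist_net {K : Set X} (hK : TotallyBounded K)
    (hρ : 0 < ρ) :
    ∃ Q : Finset X, ↑Q ⊆ K ∧ (Q : Set X).Pairwise (ρ ≤ dist · ·) ∧
      ∀ y ∈ K, ∃ p ∈ Q, dist y p < ρ := by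
  rcases K.eq_empty_or_nonempty with rfl | ⟨y, hy⟩
  · exact ⟨∅, by simp, by simp, by simp⟩
  have hK' : TotallyBounded (⋃₀ {K}) := by simpa using hK
  have hpos : 0 < packingNum {K} ρ :=
    card_le_packingNum hK' hρ rfl (s := {y}) (by simpa using hy) (by simp)
  obtain ⟨_, rfl, Q, hQK, hQ, hQcard⟩ := exists_card_eq_packingNum hK' hρ hpos
  classical
  refine ⟨Q, hQK, hQ, fun y hy => ?_⟩
  by_contra! hfar
  have hyQ : y ∉ Q := fun hyQ => (hfar y hyQ).not_gt (by simpa using hρ)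
  have hins : ((insert y Q : Finset X) : Set X).Pairwise (ρ ≤ dist · ·) := by
    rw [Finset.coe_insert, pairwise_insert]
    exact ⟨hQ, fun q hq _ => ⟨hfar q hq, dist_comm y q ▸ hfar q hq⟩⟩
  have := card_le_packingNum hK' hρ rfl (by simpa [insert_subset_iff] using ⟨hy, hQK⟩) hins
  rw [Finset.card_insert_of_notMem hyQ, hQcard] at this
  omega

theorem coverNum_le_packingNum (h𝒞 : TotallyBounded (⋃₀ 𝒞)) (hρ : 0 < ρ) {r : ℝ} (hρr : ρ ≤ r)
    {K : Set X} (hK : K ∈ 𝒞) : coverNum K r ≤ packingNum 𝒞 ρ := by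
  obtain ⟨Q, hQK, hQ, hnet⟩ :=
    (h𝒞.subset (subset_sUnion_of_mem hK)).exists_pairwise_le_dist_net hρ
  have hcover : K ⊆ ⋃ x ∈ Q, ball x r := fun y hy => by
    obtain ⟨p, hp, hyp⟩ := hnet y hy
    exact mem_biUnion hp (mem_ball.2 (hyp.trans_le hρr))
  refine (Nat.sInf_le ?_).trans (card_le_packingNum h𝒞 hρ hK hQK hQ)
  exact ⟨Q, rfl, hcover⟩

/-- The quantity `N · δ ^ α` of the theorem, for packings at the dyadic scale `δ = 2⁻¹ ^ n`. -/
def packingMass (𝒞 : Set (Set X)) (α : ℝ) (n : ℕ) : ℝ :=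
  packingNum 𝒞 (2⁻¹ ^ n) * ((2⁻¹ : ℝ) ^ n) ^ α

theorem packingNum_le_of_record {α : ℝ} {n j : ℕ}
    (hrec : ∀ i ≤ n, packingMass 𝒞 α i ≤ packingMass 𝒞 α n) (hj : j ≤ n) :
    (packingNum 𝒞 (2⁻¹ ^ (n - j)) : ℝ) ≤ packingNum 𝒞 (2⁻¹ ^ n) * ((2⁻¹ : ℝ) ^ j) ^ α := by
  have hsplit : ((2⁻¹ : ℝ) ^ n) ^ α = ((2⁻¹ : ℝ) ^ (n - j)) ^ α * ((2⁻¹ : ℝ) ^ j) ^ α := by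
    rw [← Real.mul_rpow (by positivity) (by positivity), ← pow_add, Nat.sub_add_cancel hj]
  have h := hrec (n - j) (Nat.sub_le n j)
  rw [packingMass, packingMass, hsplit] at h
  refine le_of_mul_le_mul_right ?_ (by positivity : 0 < ((2⁻¹ : ℝ) ^ (n - j)) ^ α)
  linarith

end Packing

theorem le_of_forall_record_le {β : Type*} [LinearOrder β] {f : ℕ → β} {B : β}
    (h : ∀ n, (∀ j ≤ n, f j ≤ f n) → f n ≤ B) (n : ℕ) : f n ≤ B := by
  obtain ⟨m, hm, hmax⟩ := (Finset.range (n + 1)).exists_max_image f ⟨n, by simp⟩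
  rw [Finset.mem_range] at hm
  exact (hmax n (by simp)).trans (h m fun j hj => hmax j (by simp; omega))

section Rescaling

variable {E : Type*} [NormedAddCommGroup E] [NormedSpace ℝ E]

def IsRescalingClosed (𝒞 : Set (Set E)) : Prop :=
  ∀ K ∈ 𝒞, ∀ x ∈ closedBall (0 : E) 1, ∀ r : ℝ, 0 < r → r ≤ 1 →
    ((fun w => r⁻¹ • (w - x)) '' K) ∩ closedBall 0 1 ∈ 𝒞

variable {𝒞 : Set (Set E)}

/-- Zooming in by the factor `r⁻¹` turns an `r * ρ`-separated set into a `ρ`-separated one. -/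
theorem card_le_packingNum_of_dist_le (h𝒞 : TotallyBounded (⋃₀ 𝒞))
    (hunit : ⋃₀ 𝒞 ⊆ closedBall 0 1) (hres : IsRescalingClosed 𝒞) {K : Set E} (hK : K ∈ 𝒞)
    {r ρ : ℝ} (hr : 0 < r) (hr1 : r ≤ 1) (hρ : 0 < ρ) {s : Finset E} (hsK : ↑s ⊆ K)
    (hdiam : ∀ p ∈ s, ∀ q ∈ s, dist p q ≤ r) (hs : (s : Set E).Pairwise (r * ρ ≤ dist · ·)) :
    s.card ≤ packingNum 𝒞 ρ := by
  classical
  rcases s.eq_empty_or_nonempty with rfl | ⟨x, hxs⟩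
  · simp
  have hx : x ∈ closedBall 0 1 := hunit ⟨K, hK, hsK hxs⟩
  set f : E → E := fun w => r⁻¹ • (w - x)
  have hf : ∀ p q, dist (f p) (f q) = r⁻¹ * dist p q := fun p q => by
    rw [dist_smul₀, dist_sub_right, Real.norm_of_nonneg (inv_nonneg.2 hr.le)]
  have hfinj : Function.Injective f := fun p q h => by
    simpa [hr.ne'] using congrArg (· +ᵥ x) (smul_right_injective E (inv_ne_zero hr.ne') h)
  rw [← Finset.card_image_of_injective s hfinj]
  refine card_le_packingNum h𝒞 hρ (hres K hK x hx r hr hr1) ?_ ?_ <;> rw [Finset.coe_image]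
  · rintro _ ⟨p, hp, rfl⟩
    refine ⟨mem_image_of_mem f (hsK hp), ?_⟩
    rw [mem_closedBall, ← show f x = 0 by simp [f], hf, inv_mul_le_iff₀ hr, mul_one]
    exact hdiam p hp x hxs
  · rintro _ ⟨p, hp, rfl⟩ _ ⟨q, hq, rfl⟩ hpq
    rw [hf, le_inv_mul_iff₀ hr]
    exact hs hp hq (fun h => hpq (h ▸ rfl))

theorem card_filter_dist_lt_le (h𝒞 : TotallyBounded (⋃₀ 𝒞))
    (hunit : ⋃₀ 𝒞 ⊆ closedBall 0 1) (hres : IsRescalingClosed 𝒞) {α : ℝ} (hα : 0 ≤ α) {n : ℕ}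
    (hrec : ∀ j ≤ n, packingMass 𝒞 α j ≤ packingMass 𝒞 α n) {K : Set E} (hK : K ∈ 𝒞)
    {s : Finset E} (hsK : ↑s ⊆ K) (hs : (s : Set E).Pairwise (2⁻¹ ^ n ≤ dist · ·)) (y : E)
    {ρ : ℝ} (hρ : 0 < ρ) :
    ((s.filter (dist · y < ρ)).card : ℝ) ≤ 1 + packingNum 𝒞 (2⁻¹ ^ n) * (4 * ρ) ^ α := by
  set F := s.filter (dist · y < ρ)
  have hFs : F ⊆ s := Finset.filter_subset _ _
  have hFdist : ∀ p ∈ F, ∀ q ∈ F, dist p q < 2 * ρ := fun p hp q hq => by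
    simp only [F, Finset.mem_filter] at hp hq
    linarith [dist_triangle_right p q y]
  rcases lt_or_ge (1 / 2) ρ with hρbig | hρsmall
  · have hFP : F.card ≤ packingNum 𝒞 (2⁻¹ ^ n) :=
      (Finset.card_le_card hFs).trans (card_le_packingNum h𝒞 (by positivity) hK hsK hs)
    calc (F.card : ℝ) ≤ packingNum 𝒞 (2⁻¹ ^ n) := by exact_mod_cast hFP
      _ ≤ packingNum 𝒞 (2⁻¹ ^ n) * (4 * ρ) ^ α :=
        le_mul_of_one_le_right (Nat.cast_nonneg _) (Real.one_le_rpow (by linarith) hα)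
      _ ≤ _ := le_add_of_nonneg_left zero_le_one
  obtain ⟨j, hj, hjρ⟩ := exists_nat_pow_near_of_lt_one (by positivity : 0 < 2 * ρ) (by linarith)
    (by norm_num : (0 : ℝ) < 2⁻¹) (by norm_num)
  rcases le_or_gt j n with hjn | hnj
  · have hFP : F.card ≤ packingNum 𝒞 (2⁻¹ ^ (n - j)) := by
      refine card_le_packingNum_of_dist_le h𝒞 hunit hres hK (by positivity)
        (pow_le_one₀ (by norm_num) (by norm_num)) (by positivity)
        ((Finset.coe_subset.2 hFs).trans hsK) (fun p hp q hq => (hFdist p hp q hq).le.trans hjρ) ?_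
      rw [← pow_add, Nat.add_sub_cancel' hjn]
      exact hs.mono hFs
    have hj4 : (2⁻¹ : ℝ) ^ j ≤ 4 * ρ := by rw [pow_succ] at hj; linarith
    calc (F.card : ℝ) ≤ packingNum 𝒞 (2⁻¹ ^ (n - j)) := by exact_mod_cast hFP
      _ ≤ packingNum 𝒞 (2⁻¹ ^ n) * ((2⁻¹ : ℝ) ^ j) ^ α := packingNum_le_of_record hrec hjn
      _ ≤ packingNum 𝒞 (2⁻¹ ^ n) * (4 * ρ) ^ α := by gcongr
      _ ≤ _ := le_add_of_nonneg_left zero_le_one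
  · have hjn : (2⁻¹ : ℝ) ^ j ≤ 2⁻¹ ^ n := pow_le_pow_of_le_one (by norm_num) (by norm_num) hnj.le
    have hF1 : F.card ≤ 1 := Finset.card_le_one_of_pairwise_le_dist (hs.mono hFs)
      fun p hp q hq => (hFdist p hp q hq).trans_le (hjρ.trans hjn)
    have : (F.card : ℝ) ≤ 1 := by exact_mod_cast hF1
    have : (0 : ℝ) ≤ packingNum 𝒞 (2⁻¹ ^ n) * (4 * ρ) ^ α := by positivity
    linarith

theorem card_le_card_add_packingNum_mul_sum_rpow (h𝒞 : TotallyBounded (⋃₀ 𝒞))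
    (hunit : ⋃₀ 𝒞 ⊆ closedBall 0 1) (hres : IsRescalingClosed 𝒞) {α : ℝ} (hα : 0 ≤ α) {n : ℕ}
    (hrec : ∀ j ≤ n, packingMass 𝒞 α j ≤ packingMass 𝒞 α n) {K : Set E} (hK : K ∈ 𝒞)
    {s : Finset E} (hsK : ↑s ⊆ K) (hs : (s : Set E).Pairwise (2⁻¹ ^ n ≤ dist · ·))
    {ι : Type*} {F : Finset ι} {z : ι → E} {ρ : ι → ℝ} (hρ : ∀ i, 0 < ρ i)
    (hKF : K ⊆ ⋃ i ∈ F, ball (z i) (ρ i)) :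
    (s.card : ℝ) ≤ F.card + packingNum 𝒞 (2⁻¹ ^ n) * ∑ i ∈ F, (4 * ρ i) ^ α := by
  classical
  have hcover : s ⊆ F.biUnion fun i => s.filter (dist · (z i) < ρ i) := fun p hp => by
    obtain ⟨i, hi, hpi⟩ := mem_iUnion₂.1 (hKF (hsK hp))
    exact Finset.mem_biUnion.2 ⟨i, hi, Finset.mem_filter.2 ⟨hp, hpi⟩⟩
  calc (s.card : ℝ) ≤ ∑ i ∈ F, ((s.filter (dist · (z i) < ρ i)).card : ℝ) := by
        exact_mod_cast (Finset.card_le_card hcover).trans Finset.card_biUnion_le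
    _ ≤ ∑ i ∈ F, (1 + packingNum 𝒞 (2⁻¹ ^ n) * (4 * ρ i) ^ α) := Finset.sum_le_sum fun i _ =>
        card_filter_dist_lt_le h𝒞 hunit hres hα hrec hK hsK hs (z i) (hρ i)
    _ = _ := by simp [Finset.sum_add_distrib, Finset.mul_sum]

end Rescaling

section HausdorffMeasure

variable {X : Type*} [MetricSpace X]

theorem exists_tendsto_hausdorffEDist_subseq {S : Set X} (hS : IsCompact S) {K : ℕ → Set X}
    (hK : ∀ k, IsCompact (K k)) (hKS : ∀ k, K k ⊆ S) :
    ∃ L, IsCompact L ∧ ∃ φ : ℕ → ℕ, StrictMono φ ∧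
      Tendsto (fun k => hausdorffEDist (K (φ k)) L) atTop (𝓝 0) := by
  obtain ⟨L, -, φ, hφ, hlim⟩ :=
    (TopologicalSpace.Compacts.isCompact_subsets_of_isCompact hS).tendsto_subseq
      (x := fun k => ⟨K k, hK k⟩) hKS
  exact ⟨L, L.isCompact, φ, hφ, tendsto_iff_edist_tendsto_0.1 hlim⟩

theorem eventually_subset_of_tendsto_hausdorffEDist {ι : Type*} {l : Filter ι} {K : ι → Set X}
    {L U : Set X} (hL : IsCompact L) (hU : IsOpen U) (hLU : L ⊆ U)
    (hK : Tendsto (fun i => hausdorffEDist (K i) L) l (𝓝 0)) : ∀ᶠ i in l, K i ⊆ U := by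
  obtain ⟨δ, hδ, hδU⟩ := hL.exists_thickening_subset_open hU hLU
  filter_upwards [hK.eventually (gt_mem_nhds (ENNReal.ofReal_pos.2 hδ))] with i hi x hx
  exact hδU (mem_thickening_iff_infEDist_lt.2
    ((infEDist_le_hausdorffEDist_of_mem hx).trans_lt hi))

theorem Bornology.IsBounded.exists_subset_ball_rpow_eq [Nonempty X] {s : Set X}
    (hs : IsBounded s) {α : ℝ} (hα : 0 < α) {η : ℝ} (hη : 0 < η) :
    ∃ z ρ, 0 < ρ ∧ s ⊆ ball z ρ ∧ ρ ^ α = diam s ^ α + η := by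
  set ρ := (diam s ^ α + η) ^ α⁻¹
  have hρα : ρ ^ α = diam s ^ α + η := Real.rpow_inv_rpow (by positivity) hα.ne'
  have hdiam : diam s < ρ := by
    rw [← Real.rpow_lt_rpow_iff diam_nonneg (by positivity) hα, hρα]
    linarith
  rcases s.eq_empty_or_nonempty with rfl | ⟨z, hz⟩
  · exact ⟨Classical.arbitrary X, ρ, diam_nonneg.trans_lt hdiam, empty_subset _, hρα⟩
  exact ⟨z, ρ, diam_nonneg.trans_lt hdiam,
    fun x hx => mem_ball.2 ((dist_le_diam_of_mem hs hx hz).trans_lt hdiam), hρα⟩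

variable [MeasurableSpace X] [BorelSpace X]

theorem exists_cover_tsum_ediam_rpow_lt {α : ℝ} (hα : 0 < α) {L : Set X} (hL : μH[α] L = 0)
    {ε : ℝ≥0∞} (hε : 0 < ε) :
    ∃ S : ℕ → Set X, L ⊆ ⋃ n, S n ∧ (∀ n, ediam (S n) ≤ 1) ∧ ∑' n, ediam (S n) ^ α < ε := by
  rw [Measure.hausdorffMeasure_apply] at hL
  obtain ⟨S, hS⟩ := iInf_lt_iff.1 ((iSup₂_eq_bot.1 hL 1 one_pos).trans_lt hε)
  obtain ⟨hLS, hS⟩ := iInf_lt_iff.1 hS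
  obtain ⟨hS1, hSsum⟩ := iInf_lt_iff.1 hS
  refine ⟨S, hLS, hS1, lt_of_eq_of_lt (tsum_congr fun n => ?_) hSsum⟩
  rcases (S n).eq_empty_or_nonempty with hSn | hSn
  · simp [hSn, ENNReal.zero_rpow_of_pos hα]
  · rw [iSup_pos hSn]

theorem IsCompact.exists_finite_ball_cover_sum_rpow_lt [Nonempty X] {α : ℝ} (hα : 0 ≤ α)
    {L : Set X} (hLc : IsCompact L) (hL : μH[α] L = 0) {ε : ℝ} (hε : 0 < ε) :
    ∃ (F : Finset ℕ) (z : ℕ → X) (ρ : ℕ → ℝ), (∀ n, 0 < ρ n) ∧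
      L ⊆ ⋃ n ∈ F, ball (z n) (ρ n) ∧ ∑ n ∈ F, ρ n ^ α < ε := by
  rcases hα.eq_or_lt with rfl | hα
  · have hLe : L = ∅ := by
      by_contra h
      have := Measure.one_le_hausdorffMeasure_zero_of_nonempty (nonempty_iff_ne_empty.2 h)
      simp [hL] at this
    exact ⟨∅, fun _ => Classical.arbitrary X, fun _ => 1, fun _ => one_pos, by simp [hLe],
      by simpa⟩
  obtain ⟨S, hLS, hS1, hSsum⟩ :=
    exists_cover_tsum_ediam_rpow_lt hα hL (ε := ENNReal.ofReal (ε / 2)) (by positivity)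
  have hSb : ∀ n, Bornology.IsBounded (S n) := fun n =>
    isBounded_iff_ediam_ne_top.2 (ne_top_of_le_ne_top ENNReal.one_ne_top (hS1 n))
  choose z ρ hρ hSρ hρα using fun n =>
    (hSb n).exists_subset_ball_rpow_eq hα (η := ε / 2 / 2 / 2 ^ n) (by positivity)
  obtain ⟨F, hF⟩ := hLc.elim_finite_subcover (fun n => ball (z n) (ρ n)) (fun _ => isOpen_ball)
    (hLS.trans (iUnion_mono hSρ))
  refine ⟨F, z, ρ, hρ, hF, ?_⟩
  have hdiam : ∑ n ∈ F, diam (S n) ^ α < ε / 2 := by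
    have hfin : ∀ n ∈ F, ediam (S n) ^ α ≠ ⊤ := fun n _ =>
      ENNReal.rpow_ne_top_of_nonneg hα.le (ne_top_of_le_ne_top ENNReal.one_ne_top (hS1 n))
    simp only [diam, ENNReal.toReal_rpow, ← ENNReal.toReal_sum hfin]
    exact ENNReal.toReal_lt_of_lt_ofReal ((ENNReal.sum_le_tsum F).trans_lt hSsum)
  have hgeom : ∑ n ∈ F, ε / 2 / 2 / 2 ^ n ≤ ε / 2 :=
    ((summable_geometric_two' _).sum_le_tsum F fun _ _ => by positivity).trans_eq
      (tsum_geometric_two' _)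
  calc ∑ n ∈ F, ρ n ^ α = ∑ n ∈ F, diam (S n) ^ α + ∑ n ∈ F, ε / 2 / 2 / 2 ^ n := by
        simp [hρα, Finset.sum_add_distrib]
    _ < ε / 2 + ε / 2 := add_lt_add_of_lt_of_le hdiam hgeom
    _ = ε := add_halves ε

end HausdorffMeasure

section Main

variable {E : Type*} [NormedAddCommGroup E] [NormedSpace ℝ E]

def IsClosedUnderHausdorffLimits (𝒞 : Set (Set E)) : Prop :=
  ∀ (K : ℕ → Set E) (L : Set E), (∀ k, K k ∈ 𝒞) → IsCompact L →
    Tendsto (fun k => hausdorffEDist (K k) L) atTop (𝓝 0) → L ∈ 𝒞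

variable [ProperSpace E] [MeasurableSpace E] [BorelSpace E] {𝒞 : Set (Set E)}

theorem exists_forall_packingMass_le (hcpt : ∀ K ∈ 𝒞, IsCompact K)
    (hunit : ⋃₀ 𝒞 ⊆ closedBall 0 1) (hres : IsRescalingClosed 𝒞)
    (hhaus : IsClosedUnderHausdorffLimits 𝒞) {α : ℝ} (hα : 0 ≤ α)
    (hαA : ∀ K ∈ 𝒞, μH[α] K = 0) : ∃ B, ∀ n, packingMass 𝒞 α n ≤ B := by
  have h𝒞 : TotallyBounded (⋃₀ 𝒞) := (isCompact_closedBall 0 1).totallyBounded.subset hunit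
  suffices ∃ B, ∀ n, (∀ j ≤ n, packingMass 𝒞 α j ≤ packingMass 𝒞 α n) →
      packingMass 𝒞 α n ≤ B from
    this.imp fun B hB => le_of_forall_record_le hB
  by_contra! hunb
  choose n hrec hbig using fun k : ℕ => hunb k
  have hPbig : ∀ k : ℕ, (k : ℝ) < packingNum 𝒞 (2⁻¹ ^ n k) := fun k =>
    (hbig k).trans_le (mul_le_of_le_one_right (Nat.cast_nonneg _)
      (Real.rpow_le_one (by positivity) (pow_le_one₀ (by norm_num) (by norm_num)) hα))
  have hpos : ∀ k, 0 < packingNum 𝒞 (2⁻¹ ^ n k) := fun k => by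
    exact_mod_cast (Nat.cast_nonneg k).trans_lt (hPbig k)
  choose K hK s hsK hs hcard using fun k =>
    exists_card_eq_packingNum h𝒞 (by positivity) (hpos k)
  obtain ⟨L, hLc, φ, hφ, hlim⟩ := exists_tendsto_hausdorffEDist_subseq
    (isCompact_closedBall (0 : E) 1) (fun k => hcpt _ (hK k))
    (fun k => (subset_sUnion_of_mem (hK k)).trans hunit)
  obtain ⟨F, z, ρ, hρ, hLF, hsum⟩ := hLc.exists_finite_ball_cover_sum_rpow_lt hα
    (hαA L (hhaus _ L (fun k => hK (φ k)) hLc hlim)) (ε := 2⁻¹ / 4 ^ α) (by positivity)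
  obtain ⟨k, hKF, hk⟩ := ((eventually_subset_of_tendsto_hausdorffEDist hLc
    (isOpen_biUnion fun i _ => isOpen_ball) hLF hlim).and
    (eventually_ge_atTop (2 * F.card))).exists
  have hcount := card_le_card_add_packingNum_mul_sum_rpow h𝒞 hunit hres hα (hrec (φ k))
    (hK (φ k)) (hsK _) (hs _) hρ hKF
  have hsmall : ∑ i ∈ F, (4 * ρ i) ^ α ≤ 2⁻¹ := by
    simp_rw [Real.mul_rpow (by norm_num : (0 : ℝ) ≤ 4) (hρ _).le, ← Finset.mul_sum]
    rw [lt_div_iff₀' (by positivity)] at hsum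
    exact hsum.le
  rw [hcard] at hcount
  have hkφ : (k : ℝ) ≤ φ k := by exact_mod_cast hφ.id_le k
  have hFk : (2 * F.card : ℝ) ≤ k := by exact_mod_cast hk
  have hhalf := mul_le_mul_of_nonneg_left hsmall
    (Nat.cast_nonneg (packingNum 𝒞 (2⁻¹ ^ n (φ k))) : (0 : ℝ) ≤ _)
  linarith [hPbig (φ k)]

end Main

theorem work_raccoon_minkowski_bound_general (d : ℕ)
    (𝒞 : Set (Set (EuclideanSpace ℝ (Fin d))))
    (hcpt : ∀ K ∈ 𝒞, IsCompact K ∧ K ⊆ closedBall (0 : EuclideanSpace ℝ (Fin d)) 1)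
    (hres : ∀ K ∈ 𝒞, ∀ x ∈ closedBall (0 : EuclideanSpace ℝ (Fin d)) 1,
      ∀ r : ℝ, 0 < r → r ≤ 1 →
        (((fun w => r⁻¹ • (w - x)) '' K) ∩ closedBall 0 1) ∈ 𝒞)
    (hhaus : ∀ (K : ℕ → Set (EuclideanSpace ℝ (Fin d)))
      (L : Set (EuclideanSpace ℝ (Fin d))),
      (∀ k, K k ∈ 𝒞) → IsCompact L →
      Tendsto (fun k => EMetric.hausdorffEdist (K k) L) atTop (𝓝 0) → L ∈ 𝒞)
    (α : ℝ) (hα : 0 ≤ α) (hαA : ∀ K ∈ 𝒞, μH[α] K = 0) :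
    ∃ C : ℝ, ∀ K ∈ 𝒞, ∀ r : ℝ, 0 < r → r ≤ 1 →
      (coverNum K r : ℝ) * r ^ α ≤ C := by
  have hunit : ⋃₀ 𝒞 ⊆ closedBall 0 1 := sUnion_subset fun K hK => (hcpt K hK).2
  have h𝒞 : TotallyBounded (⋃₀ 𝒞) := (isCompact_closedBall 0 1).totallyBounded.subset hunit
  obtain ⟨B, hB⟩ :=
    exists_forall_packingMass_le (fun K hK => (hcpt K hK).1) hunit hres hhaus hα hαA
  refine ⟨2 ^ α * B, fun K hK r hr hr1 => ?_⟩
  obtain ⟨n, hn, hrn⟩ :=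
    exists_nat_pow_near_of_lt_one hr hr1 (by norm_num : (0 : ℝ) < 2⁻¹) (by norm_num)
  have hcov : coverNum K r ≤ packingNum 𝒞 (2⁻¹ ^ (n + 1)) :=
    coverNum_le_packingNum h𝒞 (by positivity) hn.le hK
  have hr2 : r ≤ 2 * 2⁻¹ ^ (n + 1) := by rw [pow_succ]; linarith
  calc (coverNum K r : ℝ) * r ^ α
      ≤ packingNum 𝒞 (2⁻¹ ^ (n + 1)) * (2 * 2⁻¹ ^ (n + 1)) ^ α := by gcongr
    _ = 2 ^ α * packingMass 𝒞 α (n + 1) := by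
      rw [Real.mul_rpow (by norm_num) (by positivity), packingMass]; ring
    _ ≤ 2 ^ α * B := by gcongr; exact hB _

/-- **Work Raccoon Lemma, second part.** For `𝒞` a nonempty collection of compact subsets of
the closed unit ball of `ℝ^d`, closed under rescalings and Hausdorff convergence, and any
exponent `α ∈ 𝒜(𝒞)` (i.e. `α ≥ 0` with `H^α(K) = 0` for every `K ∈ 𝒞`), there is a constant
`C(α)` such that `N(K, r) · r^α ≤ C(α)` for every `K ∈ 𝒞` and every `0 < r ≤ 1`. -/
theorem work_raccoon_minkowski_bound (d : ℕ)
    (𝒞 : Set (Set (EuclideanSpace ℝ (Fin d))))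
    (hne : 𝒞.Nonempty)
    (hcpt : ∀ K ∈ 𝒞, IsCompact K ∧ K ⊆ closedBall (0 : EuclideanSpace ℝ (Fin d)) 1)
    (hres : ∀ K ∈ 𝒞, ∀ x ∈ closedBall (0 : EuclideanSpace ℝ (Fin d)) 1,
      ∀ r : ℝ, 0 < r → r ≤ 1 →
        (((fun w => r⁻¹ • (w - x)) '' K) ∩ closedBall 0 1) ∈ 𝒞)
    (hhaus : ∀ (K : ℕ → Set (EuclideanSpace ℝ (Fin d)))
      (L : Set (EuclideanSpace ℝ (Fin d))),
      (∀ k, K k ∈ 𝒞) → IsCompact L →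
      Tendsto (fun k => EMetric.hausdorffEdist (K k) L) atTop (𝓝 0) → L ∈ 𝒞)
    (α : ℝ) (hα : 0 ≤ α) (hαA : ∀ K ∈ 𝒞, μH[α] K = 0) :
    ∃ C : ℝ, ∀ K ∈ 𝒞, ∀ r : ℝ, 0 < r → r ≤ 1 →
      (coverNum K r : ℝ) * r ^ α ≤ C :=
  work_raccoon_minkowski_bound_general d 𝒞 hcpt hres hhaus α hα hαA
end
end

section
/- Let 𝒞 be a nonempty collection of compact subsets of the closed unit ball in ℝ^d closed under rescalings and Hausdorff convergence, and suppose the open half-line 𝒜(𝒞) = (α₀, ∞) of exponents α with H^α vanishing on all of 𝒞. Then for every α > α₀ one has lim_{r↓0} sup_{K∈𝒞} r^α N(K, r) = 0, where N(K, r) is the minimal number of open balls of radius r needed to cover K. -/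
/-!
Fix `α₀ < β < α`. As `H^β` vanishes on every `K ∈ 𝒞`, each `K` has a finite cover by balls with
`∑ radᵝ` small. Since `𝒞` is compact in the Hausdorff metric, finitely many of these covers,
doubled, serve for all of `𝒞`, so the radii can be taken `≥ ρ` for one `ρ > 0`. Every ball of such
a cover rescales to the unit ball with its trace of `K` again in `𝒞`; iterating the covers down to
scale `r` gives `N(K, r) (ρ r)^β ≤ 1`, hence `r^α N(K, r) ≤ ρ^{-β} r^{α - β} → 0` uniformly on `𝒞`.
-/

open MeasureTheory Metric Set Filter Topology
open scoped ENNReal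

noncomputable section

theorem Real.exists_gt_rpow_eq_rpow_add {a e β : ℝ} (ha : 0 ≤ a) (he : 0 < e) (hβ : 0 < β) :
    ∃ b, a < b ∧ b ^ β = a ^ β + e := by
  have hpos : 0 < a ^ β + e := by positivity
  refine ⟨(a ^ β + e) ^ β⁻¹, ?_, Real.rpow_inv_rpow hpos.le hβ.ne'⟩
  calc a = (a ^ β) ^ β⁻¹ := (Real.rpow_rpow_inv ha hβ.ne').symm
    _ < (a ^ β + e) ^ β⁻¹ :=
      Real.rpow_lt_rpow (by positivity) (lt_add_of_pos_right _ he) (inv_pos.2 hβ)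

theorem exists_gt_forall_sum_rpow_le {a : ℕ → ℝ} {θ η β : ℝ} (ha : ∀ n, 0 ≤ a n)
    (haθ : ∀ n, a n < θ) (hη : 0 < η) (hβ : 0 < β) :
    ∃ b : ℕ → ℝ, (∀ n, a n < b n ∧ b n ≤ θ) ∧
      ∀ G : Finset ℕ, ∑ n ∈ G, b n ^ β ≤ ∑ n ∈ G, a n ^ β + η := by
  -- raise `a n ^ β` by `η / 2 ^ (n + 1)`, then cap at `θ`
  choose b hb_gt hb_pow using fun n =>
    Real.exists_gt_rpow_eq_rpow_add (ha n) (by positivity : 0 < η / 2 * (1 / 2) ^ n) hβ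
  refine ⟨fun n => min θ (b n), fun n => ⟨lt_min (haθ n) (hb_gt n), min_le_left _ _⟩,
    fun G => ?_⟩
  have hgeom : ∑ n ∈ G, ((1 : ℝ) / 2) ^ n ≤ 2 := by
    simpa only [tsum_geometric_two] using
      summable_geometric_two.sum_le_tsum G fun n _ => by positivity
  calc ∑ n ∈ G, min θ (b n) ^ β ≤ ∑ n ∈ G, (a n ^ β + η / 2 * (1 / 2) ^ n) :=
        Finset.sum_le_sum fun n _ => hb_pow n ▸
          Real.rpow_le_rpow ((ha n).trans (lt_min (haθ n) (hb_gt n)).le) (min_le_right _ _) hβ.le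
    _ = ∑ n ∈ G, a n ^ β + η / 2 * ∑ n ∈ G, ((1 : ℝ) / 2) ^ n := by
        rw [Finset.sum_add_distrib, Finset.mul_sum]
    _ ≤ ∑ n ∈ G, a n ^ β + η := by nlinarith

section HausdorffNull

variable {X : Type*} [MetricSpace X]

theorem sum_diam_rpow_le_of_tsum_lt {t : ℕ → Set X} {β η : ℝ} (hβ : 0 ≤ β) (hη : 0 ≤ η)
    (hfin : ∀ n, ediam (t n) ≠ ⊤)
    (hsum : ∑' n, ⨆ _ : (t n).Nonempty, ediam (t n) ^ β < ENNReal.ofReal η) {G : Finset ℕ}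
    (hG : ∀ n ∈ G, (t n).Nonempty) : ∑ n ∈ G, diam (t n) ^ β ≤ η := by
  rw [← ENNReal.ofReal_le_ofReal_iff hη, ENNReal.ofReal_sum_of_nonneg fun n _ => by positivity]
  calc ∑ n ∈ G, ENNReal.ofReal (diam (t n) ^ β) = ∑ n ∈ G, ediam (t n) ^ β := by
        refine Finset.sum_congr rfl fun n _ => ?_
        rw [← ENNReal.ofReal_rpow_of_nonneg diam_nonneg hβ, diam, ENNReal.ofReal_toReal (hfin n)]
    _ ≤ ∑ n ∈ G, ⨆ _ : (t n).Nonempty, ediam (t n) ^ β :=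
        Finset.sum_le_sum fun n hn => le_iSup_of_le (hG n hn) le_rfl
    _ ≤ ENNReal.ofReal η := (ENNReal.sum_le_tsum G).trans hsum.le

variable [MeasurableSpace X] [BorelSpace X]

theorem exists_iUnion_ediam_le_tsum_lt_of_hausdorffMeasure_eq_zero {s : Set X} {d : ℝ}
    (hs : μH[d] s = 0) {r ε : ℝ≥0∞} (hr : 0 < r) (hε : 0 < ε) :
    ∃ t : ℕ → Set X, s ⊆ ⋃ n, t n ∧ (∀ n, ediam (t n) ≤ r) ∧
      ∑' n, ⨆ _ : (t n).Nonempty, ediam (t n) ^ d < ε := by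
  rw [Measure.hausdorffMeasure_apply] at hs
  have hinf := ((le_iSup₂ r hr).trans hs.le).trans_lt hε
  simpa only [iInf_lt_iff, exists_prop] using hinf

theorem IsCompact.exists_finset_ball_cover_sum_rpow_le_of_hausdorffMeasure_eq_zero {K : Set X}
    (hK : IsCompact K) {β : ℝ} (hβ : 0 < β) (hK0 : μH[β] K = 0) {θ η : ℝ} (hθ : 0 < θ)
    (hη : 0 < η) :
    ∃ s : Finset (X × ℝ), (∀ p ∈ s, p.1 ∈ K ∧ 0 < p.2 ∧ p.2 ≤ θ) ∧
      K ⊆ ⋃ p ∈ s, ball p.1 p.2 ∧ ∑ p ∈ s, p.2 ^ β ≤ η := by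
  classical
  obtain ⟨t, hKt, ht_ediam, ht_sum⟩ := exists_iUnion_ediam_le_tsum_lt_of_hausdorffMeasure_eq_zero
    hK0 (ENNReal.ofReal_pos.2 (half_pos hθ)) (ENNReal.ofReal_pos.2 (half_pos hη))
  have ht_fin : ∀ n, ediam (t n) ≠ ⊤ :=
    fun n => ((ht_ediam n).trans_lt ENNReal.ofReal_lt_top).ne
  have ht_diam : ∀ n, diam (t n) < θ := fun n =>
    (ENNReal.toReal_le_of_le_ofReal (half_pos hθ).le (ht_ediam n)).trans_lt (half_lt_self hθ)
  obtain ⟨rad, hrad, hrad_sum⟩ :=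
    exists_gt_forall_sum_rpow_le (fun n => diam_nonneg) ht_diam (half_pos hη) hβ
  have hrad_pos : ∀ n, 0 < rad n := fun n => diam_nonneg.trans_lt (hrad n).1
  -- a ball of radius `rad n` centred anywhere in `t n` contains `t n`
  let c : {n // (t n ∩ K).Nonempty} → X := fun n => n.2.some
  have hcover : K ⊆ ⋃ n, ball (c n) (rad n) := fun x hx => by
    obtain ⟨n, hn⟩ := mem_iUnion.1 (hKt hx)
    have hnK : (t n ∩ K).Nonempty := ⟨x, hn, hx⟩
    exact mem_iUnion.2 ⟨⟨n, hnK⟩,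
      (dist_le_diam_of_mem' (ht_fin n) hn hnK.some_mem.1).trans_lt (hrad n).1⟩
  obtain ⟨F, hF⟩ :=
    hK.elim_finite_subcover (fun n => ball (c n) (rad n)) (fun _ => isOpen_ball) hcover
  refine ⟨F.image fun n => (c n, rad n), ?_, by rwa [Finset.set_biUnion_finset_image], ?_⟩
  · simp only [Finset.mem_image]
    rintro _ ⟨n, -, rfl⟩
    exact ⟨n.2.some_mem.2, hrad_pos n, (hrad n).2⟩
  have hF_ne : ∀ n ∈ F.map (Function.Embedding.subtype _), (t n).Nonempty := by
    simp only [Finset.mem_map, Function.Embedding.coe_subtype]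
    rintro _ ⟨n, -, rfl⟩
    exact n.2.mono inter_subset_left
  calc ∑ p ∈ F.image fun n => (c n, rad n), p.2 ^ β
      ≤ ∑ n ∈ F, rad n ^ β :=
        Finset.sum_image_le_of_nonneg fun p hp => by
          obtain ⟨n, -, rfl⟩ := Finset.mem_image.1 hp
          exact (Real.rpow_pos_of_pos (hrad_pos n) β).le
    _ = ∑ n ∈ F.map (Function.Embedding.subtype _), rad n ^ β := by rw [Finset.sum_map]; rfl
    _ ≤ ∑ n ∈ F.map (Function.Embedding.subtype _), diam (t n) ^ β + η / 2 := hrad_sum _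
    _ ≤ η := by linarith [sum_diam_rpow_le_of_tsum_lt hβ.le (half_pos hη).le ht_fin ht_sum hF_ne]

end HausdorffNull

theorem Finset.exists_pos_forall_le {ι : Type*} (s : Finset ι) {f : ι → ℝ}
    (hf : ∀ i ∈ s, 0 < f i) : ∃ ρ > 0, ∀ i ∈ s, ρ ≤ f i :=
  have h : ∀ᶠ ρ in 𝓝[>] 0, 0 < ρ ∧ ∀ i ∈ s, ρ ≤ f i := eventually_mem_nhdsWithin.and <|
    (s.eventually_all).2 fun i hi => nhdsWithin_le_nhds (Iic_mem_nhds (hf i hi))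
  h.exists

section Hyperspace

open TopologicalSpace

variable {X : Type*} [MetricSpace X]

theorem TopologicalSpace.NonemptyCompacts.subset_biUnion_ball_two_mul {K L : NonemptyCompacts X}
    {s : Finset (X × ℝ)} {ε : ℝ} (hKL : dist K L < ε) (hL : (L : Set X) ⊆ ⋃ p ∈ s, ball p.1 p.2)
    (hε : ∀ p ∈ s, ε ≤ p.2) : (K : Set X) ⊆ ⋃ p ∈ s, ball p.1 (2 * p.2) := by
  intro y hy
  rw [NonemptyCompacts.dist_eq] at hKL
  obtain ⟨z, hz, hyz⟩ := exists_dist_lt_of_hausdorffDist_lt hy hKL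
    (hausdorffEDist_ne_top_of_nonempty_of_bounded K.nonempty L.nonempty
      K.isCompact.isBounded L.isCompact.isBounded)
  obtain ⟨p, hp, hzp⟩ := mem_iUnion₂.1 (hL hz)
  refine mem_iUnion₂.2 ⟨p, hp, mem_ball.2 ?_⟩
  calc dist y p.1 ≤ dist y z + dist z p.1 := dist_triangle _ _ _
    _ < ε + p.2 := add_lt_add hyz (mem_ball.1 hzp)
    _ ≤ 2 * p.2 := by linarith [hε p hp]

theorem IsCompact.exists_uniform_ball_cover {𝒦 : Set (NonemptyCompacts X)} (h𝒦 : IsCompact 𝒦)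
    {S : Set X} {β θ η : ℝ}
    (hcov : ∀ K ∈ 𝒦, ∃ s : Finset (X × ℝ), (∀ p ∈ s, p.1 ∈ S ∧ 0 < p.2 ∧ p.2 ≤ θ) ∧
      (K : Set X) ⊆ ⋃ p ∈ s, ball p.1 p.2 ∧ ∑ p ∈ s, p.2 ^ β ≤ η) :
    ∃ ρ > 0, ∀ K ∈ 𝒦, ∃ s : Finset (X × ℝ), (∀ p ∈ s, p.1 ∈ S ∧ ρ ≤ p.2 ∧ p.2 ≤ 2 * θ) ∧
      (K : Set X) ⊆ ⋃ p ∈ s, ball p.1 p.2 ∧ ∑ p ∈ s, p.2 ^ β ≤ 2 ^ β * η := by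
  classical
  choose! s hs_mem hs_cov hs_sum using hcov
  choose! ε hε_pos hε_le using fun K (hK : K ∈ 𝒦) =>
    (s K).exists_pos_forall_le fun p hp => (hs_mem K hK p hp).2.1
  -- every `K ∈ 𝒦` is close to one of finitely many `K'`, whose cover, doubled, also covers `K`
  obtain ⟨t, ht⟩ :=
    h𝒦.elim_nhds_subcover' (fun K _ => ball K (ε K)) fun K hK => ball_mem_nhds K (hε_pos K hK)
  obtain ⟨ρ, hρ, hρ_le⟩ := t.exists_pos_forall_le fun K _ => hε_pos K K.2
  refine ⟨ρ, hρ, fun K hK => ?_⟩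
  obtain ⟨K', hK't, hKK'⟩ := mem_iUnion₂.1 (ht hK)
  refine ⟨(s K').image fun p => (p.1, 2 * p.2), ?_, ?_, ?_⟩
  · simp only [Finset.mem_image]
    rintro _ ⟨p, hp, rfl⟩
    obtain ⟨hpS, hp_pos, hp_le⟩ := hs_mem K' K'.2 p hp
    exact ⟨hpS, by linarith [hρ_le K' hK't, hε_le K' K'.2 p hp], by linarith⟩
  · rw [Finset.set_biUnion_finset_image]
    exact NonemptyCompacts.subset_biUnion_ball_two_mul (mem_ball.1 hKK') (hs_cov K' K'.2)
      (hε_le K' K'.2)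
  · calc ∑ q ∈ (s K').image (fun p => (p.1, 2 * p.2)), q.2 ^ β
        ≤ ∑ p ∈ s K', (2 * p.2) ^ β := Finset.sum_image_le_of_nonneg fun q hq => by
          obtain ⟨p, hp, rfl⟩ := Finset.mem_image.1 hq
          exact Real.rpow_nonneg (by linarith [(hs_mem K' K'.2 p hp).2.1]) β
      _ = 2 ^ β * ∑ p ∈ s K', p.2 ^ β := by
          rw [Finset.mul_sum]
          exact Finset.sum_congr rfl fun p hp =>
            Real.mul_rpow zero_le_two (hs_mem K' K'.2 p hp).2.1.le
      _ ≤ 2 ^ β * η := by gcongr; exact hs_sum K' K'.2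

theorem isCompact_setOf_coe_mem {𝒞 : Set (Set X)} {B : Set X} (hB : IsCompact B)
    (hsub : ∀ K ∈ 𝒞, K ⊆ B)
    (hhaus : ∀ (K : ℕ → Set X) (L : Set X), (∀ k, K k ∈ 𝒞) → IsCompact L →
      Tendsto (fun k => hausdorffEDist (K k) L) atTop (𝓝 0) → L ∈ 𝒞) :
    IsCompact {K : NonemptyCompacts X | (K : Set X) ∈ 𝒞} := by
  have : CompactSpace B := isCompact_iff_compactSpace.1 hB
  have hmap : Isometry (NonemptyCompacts.map ((↑) : B → X) continuous_subtype_val) :=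
    fun _ _ => hausdorffEDist_image isometry_subtype_coe
  refine (isCompact_range hmap.continuous).of_isClosed_subset ?_ fun K hK => ?_
  · refine IsSeqClosed.isClosed fun Ks L hKs hlim => hhaus _ _ hKs L.isCompact ?_
    exact tendsto_iff_edist_tendsto_0.1 hlim
  · rw [NonemptyCompacts.range_map Topology.IsInducing.subtypeVal, Subtype.range_coe]
    exact hsub K hK

end Hyperspace

theorem exists_uniform_ball_cover_of_hausdorffMeasure_eq_zero {X : Type*} [MetricSpace X]
    [MeasurableSpace X] [BorelSpace X] {𝒞 : Set (Set X)} {B : Set X} (hB : IsCompact B)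
    (hcpt : ∀ K ∈ 𝒞, IsCompact K ∧ K ⊆ B)
    (hhaus : ∀ (K : ℕ → Set X) (L : Set X), (∀ k, K k ∈ 𝒞) → IsCompact L →
      Tendsto (fun k => hausdorffEDist (K k) L) atTop (𝓝 0) → L ∈ 𝒞)
    {β : ℝ} (hβ : 0 < β) (h0 : ∀ K ∈ 𝒞, μH[β] K = 0) {θ : ℝ} (hθ : 0 < θ) :
    ∃ ρ > 0, ∀ K ∈ 𝒞, ∃ s : Finset (X × ℝ), (∀ p ∈ s, p.1 ∈ B ∧ ρ ≤ p.2 ∧ p.2 ≤ θ) ∧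
      K ⊆ ⋃ p ∈ s, ball p.1 p.2 ∧ ∑ p ∈ s, p.2 ^ β ≤ 1 := by
  obtain ⟨ρ, hρ, hcov⟩ := (isCompact_setOf_coe_mem hB (fun K hK => (hcpt K hK).2) hhaus)
    |>.exists_uniform_ball_cover (S := B) (β := β) (θ := θ / 2) (η := (1 / 2) ^ β) fun K hK => by
      obtain ⟨s, hs_mem, hs⟩ := (hcpt K hK).1
        |>.exists_finset_ball_cover_sum_rpow_le_of_hausdorffMeasure_eq_zero hβ (h0 K hK)
          (half_pos hθ) (η := (1 / 2) ^ β) (by positivity)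
      exact ⟨s, fun p hp => ⟨(hcpt K hK).2 (hs_mem p hp).1, (hs_mem p hp).2⟩, hs⟩
  refine ⟨ρ, hρ, fun K hK => ?_⟩
  rcases K.eq_empty_or_nonempty with rfl | hne
  · exact ⟨∅, by simp, by simp, by simp⟩
  obtain ⟨s, hs_mem, hs_cov, hs_sum⟩ := hcov ⟨⟨K, (hcpt K hK).1⟩, hne⟩ hK
  refine ⟨s, fun p hp => ?_, hs_cov, ?_⟩
  · obtain ⟨hpB, hρp, hpθ⟩ := hs_mem p hp
    exact ⟨hpB, hρp, by linarith⟩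
  · rwa [← Real.mul_rpow zero_le_two (by norm_num), mul_one_div_cancel two_ne_zero,
      Real.one_rpow] at hs_sum

theorem coverNum_le_card {X : Type*} [PseudoMetricSpace X] {K : Set X} {r : ℝ} {t : Finset X}
    (ht : K ⊆ ⋃ x ∈ t, ball x r) : coverNum K r ≤ t.card :=
  Nat.sInf_le ⟨t, rfl, ht⟩

theorem exists_finset_cover_of_forall_inter {X ι : Type*} [PseudoMetricSpace X] {K : Set X}
    {s : Finset ι} {U : ι → Set X} (hK : K ⊆ ⋃ i ∈ s, U i) {r c : ℝ} {w : ι → ℝ} (hc : 0 ≤ c)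
    (h : ∀ i ∈ s, ∃ T : Finset X, K ∩ U i ⊆ ⋃ x ∈ T, ball x r ∧ T.card * c ≤ w i) :
    ∃ T : Finset X, K ⊆ ⋃ x ∈ T, ball x r ∧ T.card * c ≤ ∑ i ∈ s, w i := by
  classical
  choose! T hT_cov hT_card using h
  refine ⟨s.biUnion T, fun y hy => ?_, ?_⟩
  · obtain ⟨i, hi, hyi⟩ := mem_iUnion₂.1 (hK hy)
    obtain ⟨x, hx, hyx⟩ := mem_iUnion₂.1 (hT_cov i hi ⟨hy, hyi⟩)
    exact mem_iUnion₂.2 ⟨x, Finset.mem_biUnion.2 ⟨i, hi, hx⟩, hyx⟩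
  · calc ((s.biUnion T).card : ℝ) * c ≤ (∑ i ∈ s, (T i).card : ℕ) * c := by
          gcongr; exact Finset.card_biUnion_le
      _ = ∑ i ∈ s, (T i).card * c := by push_cast; rw [Finset.sum_mul]
      _ ≤ ∑ i ∈ s, w i := Finset.sum_le_sum hT_card

section Rescaling

variable {E : Type*} [NormedAddCommGroup E] [NormedSpace ℝ E]

theorem inter_ball_subset_biUnion_ball_of_rescale [DecidableEq E] {K : Set E} {x : E} {a r : ℝ}
    (ha : 0 < a) {t : Finset E}
    (ht : (fun w => a⁻¹ • (w - x)) '' K ∩ closedBall 0 1 ⊆ ⋃ y ∈ t, ball y r) :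
    K ∩ ball x a ⊆ ⋃ y ∈ t.image (fun y => x + a • y), ball y (a * r) := by
  rw [Finset.set_biUnion_finset_image]
  rintro w ⟨hwK, hwx⟩
  set z := a⁻¹ • (w - x)
  have hz : z ∈ closedBall (0 : E) 1 := by
    rw [mem_closedBall_zero_iff, norm_smul, Real.norm_of_nonneg (inv_nonneg.2 ha.le),
      inv_mul_le_iff₀ ha, mul_one, ← dist_eq_norm]
    exact (mem_ball.1 hwx).le
  obtain ⟨y, hy, hzy⟩ := mem_iUnion₂.1 (ht ⟨⟨w, hwK, rfl⟩, hz⟩)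
  refine mem_iUnion₂.2 ⟨y, hy, mem_ball.2 ?_⟩
  have hw : w = x + a • z := by simp only [z, smul_inv_smul₀ ha.ne', add_sub_cancel]
  rw [hw, dist_add_left, dist_smul₀, Real.norm_of_nonneg ha.le]
  exact mul_lt_mul_of_pos_left (mem_ball.1 hzy) ha

variable {𝒞 : Set (Set E)}
  (hres : ∀ K ∈ 𝒞, ∀ x ∈ closedBall (0 : E) 1, ∀ r : ℝ, 0 < r → r ≤ 1 →
    ((fun w => r⁻¹ • (w - x)) '' K) ∩ closedBall 0 1 ∈ 𝒞)
include hres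

theorem exists_finset_cover_inter_ball {β ρ r a : ℝ} (hβ : 0 ≤ β) (hρ : 0 < ρ) (hr : 0 ≤ r)
    (hr1 : r ≤ 1) {K : Set E} (hK : K ∈ 𝒞) {x : E} (hx : x ∈ closedBall 0 1) (hρa : ρ ≤ a)
    (ha1 : a ≤ 1)
    (ih : r ≤ a → ∀ L ∈ 𝒞, ∃ t : Finset E, L ⊆ ⋃ y ∈ t, ball y (r / a) ∧
      t.card * (ρ * (r / a)) ^ β ≤ 1) :
    ∃ T : Finset E, K ∩ ball x a ⊆ ⋃ y ∈ T, ball y r ∧ T.card * (ρ * r) ^ β ≤ a ^ β := by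
  classical
  have ha : 0 < a := hρ.trans_le hρa
  rcases lt_or_ge a r with har | hra
  · refine ⟨{x}, fun w hw => ?_, ?_⟩
    · simpa using (mem_ball.1 hw.2).trans har
    · rw [Finset.card_singleton, Nat.cast_one, one_mul]
      exact Real.rpow_le_rpow (by positivity) (by nlinarith) hβ
  -- a ball of radius `a ≥ r` is rescaled to the unit ball, where `r` becomes `r / a`
  obtain ⟨t, ht_cov, ht_card⟩ := ih hra _ (hres K hK x hx a ha ha1)
  refine ⟨t.image fun y => x + a • y, ?_, ?_⟩
  · simpa only [mul_div_cancel₀ r ha.ne'] using inter_ball_subset_biUnion_ball_of_rescale ha ht_cov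
  · have hcard : ((t.image fun y => x + a • y).card : ℝ) ≤ t.card := by
      exact_mod_cast Finset.card_image_le
    have hsplit : (ρ * r) ^ β = (ρ * (r / a)) ^ β * a ^ β := by
      rw [← Real.mul_rpow (by positivity) ha.le, mul_assoc, div_mul_cancel₀ r ha.ne']
    calc ((t.image fun y => x + a • y).card : ℝ) * (ρ * r) ^ β
        ≤ t.card * (ρ * (r / a)) ^ β * a ^ β := by
          rw [hsplit, ← mul_assoc]; gcongr
      _ ≤ a ^ β := mul_le_of_le_one_left (by positivity) ht_card

variable {β ρ θ : ℝ} (hβ : 0 ≤ β) (hρ : 0 < ρ)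
  (hcov : ∀ K ∈ 𝒞, ∃ s : Finset (E × ℝ), (∀ p ∈ s, p.1 ∈ closedBall 0 1 ∧ ρ ≤ p.2 ∧ p.2 ≤ θ) ∧
    K ⊆ ⋃ p ∈ s, ball p.1 p.2 ∧ ∑ p ∈ s, p.2 ^ β ≤ 1)
include hβ hρ hcov

theorem exists_finset_cover_card_mul_rpow_le_one_of_pow_lt (hθ : θ ≤ 1) (n : ℕ) :
    ∀ K ∈ 𝒞, ∀ r, 0 < r → r ≤ 1 → θ ^ n < r →
      ∃ t : Finset E, K ⊆ ⋃ x ∈ t, ball x r ∧ t.card * (ρ * r) ^ β ≤ 1 := by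
  induction n with
  | zero => intro K _ r _ hr1 hr; rw [pow_zero] at hr; linarith
  | succ n ih =>
    intro K hK r hr0 hr1 hr
    obtain ⟨s, hs_mem, hs_cov, hs_sum⟩ := hcov K hK
    have hpiece : ∀ p ∈ s, ∃ T : Finset E, K ∩ ball p.1 p.2 ⊆ ⋃ x ∈ T, ball x r ∧
        T.card * (ρ * r) ^ β ≤ p.2 ^ β := by
      intro p hp
      obtain ⟨hx, hρp, hpθ⟩ := hs_mem p hp
      have hp_pos : 0 < p.2 := hρ.trans_le hρp
      have hθ_pos : 0 < θ := hp_pos.trans_le hpθ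
      have hθn : θ ^ n * p.2 < r :=
        calc θ ^ n * p.2 ≤ θ ^ n * θ := by gcongr
          _ < r := by rwa [← pow_succ]
      refine exists_finset_cover_inter_ball hres hβ hρ hr0.le hr1 hK hx hρp
        (hpθ.trans hθ) fun hrp L hL => ih L hL _ (by positivity) ((div_le_one hp_pos).2 hrp) ?_
      rwa [lt_div_iff₀ hp_pos]
    obtain ⟨T, hT_cov, hT_card⟩ :=
      exists_finset_cover_of_forall_inter hs_cov (by positivity) hpiece
    exact ⟨T, hT_cov, hT_card.trans hs_sum⟩

theorem coverNum_mul_rpow_le_one (hθ : θ < 1) {K : Set E} (hK : K ∈ 𝒞) {r : ℝ} (hr : 0 < r)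
    (hr1 : r ≤ 1) : coverNum K r * (ρ * r) ^ β ≤ 1 := by
  obtain ⟨n, hn⟩ := exists_pow_lt_of_lt_one hr hθ
  obtain ⟨t, ht_cov, ht_card⟩ :=
    exists_finset_cover_card_mul_rpow_le_one_of_pow_lt hres hβ hρ hcov hθ.le n K hK r hr hr1 hn
  calc (coverNum K r : ℝ) * (ρ * r) ^ β ≤ t.card * (ρ * r) ^ β := by
        gcongr; exact_mod_cast coverNum_le_card ht_cov
    _ ≤ 1 := ht_card

end Rescaling

theorem Real.rpow_mul_le_of_mul_mul_rpow_le_one {N r ρ α β : ℝ} (hr : 0 < r) (hρ : 0 < ρ)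
    (hN : N * (ρ * r) ^ β ≤ 1) : r ^ α * N ≤ r ^ (α - β) / ρ ^ β := by
  have hsplit : r ^ α * N = r ^ (α - β) / ρ ^ β * (N * (ρ * r) ^ β) := by
    rw [Real.mul_rpow hρ.le hr.le, Real.rpow_sub hr]
    field_simp
  rw [hsplit]
  exact mul_le_of_le_one_right (by positivity) hN

theorem uniform_minkowski_content_vanishes_general (d : ℕ)
    (𝒞 : Set (Set (EuclideanSpace ℝ (Fin d))))
    (hcpt : ∀ K ∈ 𝒞, IsCompact K ∧ K ⊆ closedBall (0 : EuclideanSpace ℝ (Fin d)) 1)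
    (hres : ∀ K ∈ 𝒞, ∀ x ∈ closedBall (0 : EuclideanSpace ℝ (Fin d)) 1,
      ∀ r : ℝ, 0 < r → r ≤ 1 →
        (((fun w => r⁻¹ • (w - x)) '' K) ∩ closedBall 0 1) ∈ 𝒞)
    (hhaus : ∀ (K : ℕ → Set (EuclideanSpace ℝ (Fin d)))
      (L : Set (EuclideanSpace ℝ (Fin d))),
      (∀ k, K k ∈ 𝒞) → IsCompact L →
      Tendsto (fun k => EMetric.hausdorffEdist (K k) L) atTop (𝓝 0) → L ∈ 𝒞)
    (α₀ : ℝ)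
    (hA : {α : ℝ | 0 ≤ α ∧ ∀ K ∈ 𝒞, μH[α] K = 0} = Set.Ioi α₀) :
    ∀ α : ℝ, α₀ < α →
      ∀ ε : ℝ, 0 < ε → ∃ δ : ℝ, 0 < δ ∧ ∀ r : ℝ, 0 < r → r < δ →
        ∀ K ∈ 𝒞, r ^ α * (coverNum K r : ℝ) < ε := by
  intro α hα ε hε
  obtain ⟨β, hα₀β, hβα⟩ := exists_between hα
  obtain ⟨γ, hα₀γ, hγβ⟩ := exists_between hα₀β
  have hβA : β ∈ {α : ℝ | 0 ≤ α ∧ ∀ K ∈ 𝒞, μH[α] K = 0} := hA ▸ hα₀β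
  have hγA : γ ∈ {α : ℝ | 0 ≤ α ∧ ∀ K ∈ 𝒞, μH[α] K = 0} := hA ▸ hα₀γ
  have hβ : 0 < β := hγA.1.trans_lt hγβ
  obtain ⟨ρ, hρ, hcov⟩ := exists_uniform_ball_cover_of_hausdorffMeasure_eq_zero
    (isCompact_closedBall 0 1) hcpt hhaus hβ hβA.2 (θ := 1 / 2) (by norm_num)
  have hlim : Tendsto (fun r : ℝ => r ^ (α - β) / ρ ^ β) (𝓝 0) (𝓝 0) := by
    have h := (Real.continuousAt_rpow_const 0 (α - β) (Or.inr (by linarith))).tendsto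
    simpa [Real.zero_rpow (by linarith : α - β ≠ 0)] using h.div_const (ρ ^ β)
  obtain ⟨δ, hδ, hδ_small⟩ := Metric.eventually_nhds_iff.1
    ((hlim.eventually (gt_mem_nhds hε)).and (Iio_mem_nhds one_pos))
  refine ⟨δ, hδ, fun r hr hrδ K hK => ?_⟩
  obtain ⟨hr_small, hr1⟩ := hδ_small (by rwa [Real.dist_0_eq_abs, abs_of_pos hr])
  calc r ^ α * coverNum K r ≤ r ^ (α - β) / ρ ^ β := Real.rpow_mul_le_of_mul_mul_rpow_le_one hr hρ
        (coverNum_mul_rpow_le_one hres hβ.le hρ hcov (by norm_num) hK hr hr1.le)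
    _ < ε := hr_small

/-- In the setting of the Work Raccoon Lemma, if `𝒜(𝒞) = (α₀, ∞)`, then for every `α > α₀`
one has `lim_{r↓0} sup_{K ∈ 𝒞} r^α N(K, r) = 0`. -/
theorem uniform_minkowski_content_vanishes (d : ℕ)
    (𝒞 : Set (Set (EuclideanSpace ℝ (Fin d))))
    (hne : 𝒞.Nonempty)
    (hcpt : ∀ K ∈ 𝒞, IsCompact K ∧ K ⊆ closedBall (0 : EuclideanSpace ℝ (Fin d)) 1)
    (hres : ∀ K ∈ 𝒞, ∀ x ∈ closedBall (0 : EuclideanSpace ℝ (Fin d)) 1,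
      ∀ r : ℝ, 0 < r → r ≤ 1 →
        (((fun w => r⁻¹ • (w - x)) '' K) ∩ closedBall 0 1) ∈ 𝒞)
    (hhaus : ∀ (K : ℕ → Set (EuclideanSpace ℝ (Fin d)))
      (L : Set (EuclideanSpace ℝ (Fin d))),
      (∀ k, K k ∈ 𝒞) → IsCompact L →
      Tendsto (fun k => EMetric.hausdorffEdist (K k) L) atTop (𝓝 0) → L ∈ 𝒞)
    (α₀ : ℝ)
    (hA : {α : ℝ | 0 ≤ α ∧ ∀ K ∈ 𝒞, μH[α] K = 0} = Set.Ioi α₀) :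
    ∀ α : ℝ, α₀ < α →
      ∀ ε : ℝ, 0 < ε → ∃ δ : ℝ, 0 < δ ∧ ∀ r : ℝ, 0 < r → r < δ →
        ∀ K ∈ 𝒞, r ^ α * (coverNum K r : ℝ) < ε :=
  uniform_minkowski_content_vanishes_general d 𝒞 hcpt hres hhaus α₀ hA
end
end

section
/- Let K⁰ be a compact subset of the closed unit ball in ℝ^d, and define 𝒞 to be the collection of all compact sets K contained in some K^∞ arising as a Hausdorff limit of rescaled sets ((K⁰ − x_k)/r_k) ∩ B̄₁, where x_k ∈ ℝ^d converges and r_k ∈ (0,1] converges. Then 𝒞 contains K⁰, is closed under the rescaling operation K ↦ ((K − x)/r) ∩ B̄₁ for x ∈ B̄₁ and 0 < r ≤ 1, and is closed under Hausdorff convergence of compact sets. -/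
/-!
A compact set lies in `𝒞(K⁰)` as soon as it lies in the Kuratowski lower limit of a sequence of
rescalings `Aₖ = ((K⁰ - yₖ)/sₖ) ∩ B̄₁` with `0 < sₖ ≤ 1`: once `Aₖ ≠ ∅` the centres stay in `B̄₂`,
so by compactness of `B̄₂ × [0,1]` and of the closed subsets of `B̄₁` (Blaschke) a subsequence of
`(yₖ, sₖ, Aₖ)` converges, and a Hausdorff limit contains the lower limit. Closure under Hausdorff
limits follows by a diagonal choice of rescalings. For the rescaling `((K - x)/r) ∩ B̄₁` of
`K ⊆ K^∞ = lim ((K⁰ - xₖ)/rₖ) ∩ B̄₁`: if `rₖ → r₀ > 0` then `K^∞ ⊆ ((K⁰ - x₀)/r₀) ∩ B̄₁` and two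
rescalings compose into one; if `rₖ → 0`, rescaling at the slightly larger scale `rₖ (r + ηₖ)`,
with `ηₖ` the Hausdorff distance from `Aₖ` to `K^∞`, keeps the rescaled nearest points of `Aₖ`
inside `B̄₁`.
-/

open MeasureTheory Metric Set Filter Topology
open scoped ENNReal

noncomputable section

/-- The rescaling `K ↦ ((K - x)/r) ∩ B̄₁`. -/
def resc {d : ℕ} (K : Set (EuclideanSpace ℝ (Fin d))) (x : EuclideanSpace ℝ (Fin d))
    (r : ℝ) : Set (EuclideanSpace ℝ (Fin d)) :=
  ((fun w => r⁻¹ • (w - x)) '' K) ∩ closedBall 0 1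

/-- The family `𝒞(K⁰)` of all compact sets contained in some Hausdorff limit `K^∞` of
rescalings `((K⁰ - x_k)/r_k) ∩ B̄₁` with `x_k ∈ ℝ^d` convergent and `r_k ∈ (0,1]`
convergent. -/
def blowupFamily {d : ℕ} (K0 : Set (EuclideanSpace ℝ (Fin d))) :
    Set (Set (EuclideanSpace ℝ (Fin d))) :=
  {K | IsCompact K ∧ ∃ (Kinf : Set (EuclideanSpace ℝ (Fin d)))
    (x : ℕ → EuclideanSpace ℝ (Fin d)) (r : ℕ → ℝ)
    (x₀ : EuclideanSpace ℝ (Fin d)) (r₀ : ℝ),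
      IsCompact Kinf ∧ K ⊆ Kinf ∧
      (∀ k, 0 < r k ∧ r k ≤ 1) ∧
      Tendsto x atTop (𝓝 x₀) ∧ Tendsto r atTop (𝓝 r₀) ∧
      Tendsto (fun k => EMetric.hausdorffEdist (resc K0 (x k) (r k)) Kinf) atTop (𝓝 0)}

open TopologicalSpace (Closeds)

section KuratowskiLiminf

variable {α : Type*}

def kuratowskiLiminf [TopologicalSpace α] (A : ℕ → Set α) : Set α :=
  {z | ∃ q : ℕ → α, (∀ᶠ k in atTop, q k ∈ A k) ∧ Tendsto q atTop (𝓝 z)}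

lemma kuratowskiLiminf_subset_comp [TopologicalSpace α] (A : ℕ → Set α) {φ : ℕ → ℕ}
    (hφ : Tendsto φ atTop atTop) : kuratowskiLiminf A ⊆ kuratowskiLiminf (A ∘ φ) :=
  fun _ ⟨q, hqA, hq⟩ => ⟨q ∘ φ, hφ.eventually hqA, hq.comp hφ⟩

variable [PseudoEMetricSpace α] {A : ℕ → Set α}

lemma kuratowskiLiminf_subset_of_tendsto_hausdorffEDist {T : Set α} (hT : IsClosed T)
    (hAT : Tendsto (fun k => hausdorffEDist (A k) T) atTop (𝓝 0)) :
    kuratowskiLiminf A ⊆ T := by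
  rintro z ⟨q, hqA, hq⟩
  have hqT : Tendsto (fun k => infEDist (q k) T) atTop (𝓝 0) :=
    tendsto_of_tendsto_of_tendsto_of_le_of_le' tendsto_const_nhds hAT
      (Eventually.of_forall fun _ => zero_le)
      (hqA.mono fun _ => infEDist_le_hausdorffEDist_of_mem)
  have hz : infEDist z T = 0 := tendsto_nhds_unique ((continuous_infEDist.tendsto z).comp hq) hqT
  exact hT.closure_subset (mem_closure_iff_infEDist_zero.2 hz)

lemma exists_seq_infEDist_eq_edist (hA : ∀ k, IsCompact (A k))
    (hne : ∀ᶠ k in atTop, (A k).Nonempty) (z : α) :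
    ∃ q : ℕ → α, ∀ᶠ k in atTop, q k ∈ A k ∧ infEDist z (A k) = edist z (q k) := by
  have (k : ℕ) : ∃ p, (A k).Nonempty → p ∈ A k ∧ infEDist z (A k) = edist z p := by
    by_cases h : (A k).Nonempty
    · obtain ⟨p, hp, hzp⟩ := (hA k).exists_infEDist_eq_edist h z
      exact ⟨p, fun _ => ⟨hp, hzp⟩⟩
    · exact ⟨z, fun h' => absurd h' h⟩
  choose q hq using this
  exact ⟨q, hne.mono hq⟩

lemma mem_kuratowskiLiminf_of_tendsto_infEDist (hA : ∀ k, IsCompact (A k)) {z : α}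
    (hz : Tendsto (fun k => infEDist z (A k)) atTop (𝓝 0)) : z ∈ kuratowskiLiminf A := by
  have hne : ∀ᶠ k in atTop, (A k).Nonempty :=
    (hz.eventually_ne ENNReal.zero_ne_top).mono fun _ hk =>
      nonempty_iff_ne_empty.2 fun h => hk (h ▸ infEDist_empty)
  obtain ⟨q, hq⟩ := exists_seq_infEDist_eq_edist hA hne z
  refine ⟨q, hq.mono fun _ => And.left, tendsto_iff_edist_tendsto_0.2 (hz.congr' ?_)⟩
  filter_upwards [hq] with k hk
  rw [hk.2, edist_comm]

lemma exists_seq_edist_le_hausdorffEDist (hA : ∀ k, IsCompact (A k)) {T : Set α}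
    (hAT : ∀ᶠ k in atTop, hausdorffEDist (A k) T ≠ ⊤) {w : α} (hw : w ∈ T) :
    ∃ p : ℕ → α, ∀ᶠ k in atTop, p k ∈ A k ∧ edist (p k) w ≤ hausdorffEDist (A k) T := by
  have hne : ∀ᶠ k in atTop, (A k).Nonempty := hAT.mono fun _ hk =>
    nonempty_of_hausdorffEDist_ne_top ⟨w, hw⟩ (hausdorffEDist_comm.trans_ne hk)
  obtain ⟨p, hp⟩ := exists_seq_infEDist_eq_edist hA hne w
  refine ⟨p, hp.mono fun k ⟨hpA, hwp⟩ => ⟨hpA, ?_⟩⟩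
  rw [edist_comm, ← hwp, hausdorffEDist_comm]
  exact infEDist_le_hausdorffEDist_of_mem hw

lemma subset_kuratowskiLiminf_of_tendsto_hausdorffEDist (hA : ∀ k, IsCompact (A k))
    {T : Set α} (hAT : Tendsto (fun k => hausdorffEDist (A k) T) atTop (𝓝 0)) :
    T ⊆ kuratowskiLiminf A := by
  intro w hw
  obtain ⟨p, hp⟩ :=
    exists_seq_edist_le_hausdorffEDist hA (hAT.eventually_ne ENNReal.zero_ne_top) hw
  refine ⟨p, hp.mono fun _ => And.left, tendsto_iff_edist_tendsto_0.2 ?_⟩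
  exact tendsto_of_tendsto_of_tendsto_of_le_of_le' tendsto_const_nhds hAT
    (Eventually.of_forall fun _ => zero_le) (hp.mono fun _ => And.right)

end KuratowskiLiminf

lemma isCompact_setOf_closeds_subset {α : Type*} [EMetricSpace α] [CompleteSpace α]
    {s : Set α} (hs : IsCompact s) : IsCompact {F : Closeds α | (F : Set α) ⊆ s} :=
  (Closeds.totallyBounded_subsets_of_totallyBounded hs.totallyBounded).isCompact_of_isClosed
    (Closeds.isClosed_subsets_of_isClosed hs.isClosed)

section Rescaling

variable {d : ℕ}

local notation "E" => EuclideanSpace ℝ (Fin d)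

lemma mem_resc_iff {K : Set E} {x w : E} {r : ℝ} (hr : r ≠ 0) :
    w ∈ resc K x r ↔ x + r • w ∈ K ∧ w ∈ closedBall 0 1 := by
  refine and_congr_left' ⟨?_, fun h => ⟨x + r • w, h, by simp [hr]⟩⟩
  rintro ⟨u, hu, rfl⟩
  simpa [hr] using hu

lemma IsCompact.resc {K : Set E} (hK : IsCompact K) (x : E) (r : ℝ) :
    IsCompact (resc K x r) :=
  (hK.image (by fun_prop)).inter_right isClosed_closedBall

lemma resc_subset_closedBall (K : Set E) (x : E) (r : ℝ) : resc K x r ⊆ closedBall 0 1 :=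
  inter_subset_right

lemma resc_mono {K K' : Set E} (h : K ⊆ K') (x : E) (r : ℝ) : resc K x r ⊆ resc K' x r :=
  inter_subset_inter_left _ (image_mono h)

lemma resc_zero_one {K : Set E} (h : K ⊆ closedBall 0 1) : resc K 0 1 = K := by
  ext w
  rw [mem_resc_iff one_ne_zero, zero_add, one_smul, and_iff_left_of_imp (@h w)]

lemma resc_resc_subset (K : Set E) {y x : E} {s r : ℝ} (hs : s ≠ 0) (hr : r ≠ 0) :
    resc (resc K y s) x r ⊆ resc K (y + s • x) (s * r) := by
  intro w hw
  rw [mem_resc_iff hr, mem_resc_iff hs] at hw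
  rw [mem_resc_iff (mul_ne_zero hs hr), add_assoc, mul_smul, ← smul_add]
  exact ⟨hw.1.1, hw.2⟩

lemma inv_smul_sub_mem_resc {K : Set E} {p v : E} {t : ℝ} (ht : 0 < t) (hp : p ∈ K)
    (hpv : ‖p - v‖ ≤ t) : t⁻¹ • (p - v) ∈ resc K v t := by
  refine ⟨mem_image_of_mem _ hp, ?_⟩
  rw [mem_closedBall_zero_iff, norm_smul, Real.norm_of_nonneg (inv_nonneg.2 ht.le)]
  exact inv_mul_le_one_of_le₀ hpv ht.le

lemma norm_le_two_of_resc_nonempty {K : Set E} (hK : K ⊆ closedBall 0 1) {y : E} {s : ℝ}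
    (hs : 0 < s) (hs1 : s ≤ 1) (hne : (resc K y s).Nonempty) : y ∈ closedBall 0 2 := by
  obtain ⟨w, hw⟩ := hne
  rw [mem_resc_iff hs.ne'] at hw
  have hyw : ‖y + s • w‖ ≤ 1 := mem_closedBall_zero_iff.1 (hK hw.1)
  have hsw : ‖s • w‖ ≤ 1 := by
    rw [norm_smul, Real.norm_of_nonneg hs.le]
    exact mul_le_one₀ hs1 (norm_nonneg w) (mem_closedBall_zero_iff.1 hw.2)
  rw [mem_closedBall_zero_iff]
  calc ‖y‖ = ‖(y + s • w) - s • w‖ := by rw [add_sub_cancel_right]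
    _ ≤ 1 + 1 := (norm_sub_le _ _).trans (add_le_add hyw hsw)
    _ = 2 := one_add_one_eq_two

lemma kuratowskiLiminf_resc_subset {K : Set E} (hK : IsClosed K) {x : ℕ → E} {r : ℕ → ℝ}
    {x₀ : E} {r₀ : ℝ} (hr : ∀ k, r k ≠ 0) (hr₀ : r₀ ≠ 0) (hx : Tendsto x atTop (𝓝 x₀))
    (hrt : Tendsto r atTop (𝓝 r₀)) :
    kuratowskiLiminf (fun k => resc K (x k) (r k)) ⊆ resc K x₀ r₀ := by
  rintro w ⟨q, hqA, hq⟩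
  simp only [mem_resc_iff (hr _)] at hqA
  rw [mem_resc_iff hr₀]
  exact ⟨hK.mem_of_tendsto (hx.add (hrt.smul hq)) (hqA.mono fun _ => And.left),
    isClosed_closedBall.mem_of_tendsto hq (hqA.mono fun _ => And.right)⟩

end Rescaling

section BlowupFamily

variable {d : ℕ} {K0 : Set (EuclideanSpace ℝ (Fin d))}

local notation "E" => EuclideanSpace ℝ (Fin d)

lemma mem_blowupFamily_of_subset_resc (hK0 : IsCompact K0) {M : Set E} (hM : IsCompact M)
    {y : E} {s : ℝ} (hs : 0 < s) (hs1 : s ≤ 1) (hMs : M ⊆ resc K0 y s) :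
    M ∈ blowupFamily K0 :=
  ⟨hM, resc K0 y s, fun _ => y, fun _ => s, y, s, hK0.resc y s, hMs, fun _ => ⟨hs, hs1⟩,
    tendsto_const_nhds, tendsto_const_nhds,
    tendsto_const_nhds.congr fun _ => hausdorffEDist_self.symm⟩

lemma mem_blowupFamily_of_subset_kuratowskiLiminf (hK0 : IsCompact K0)
    (hK0sub : K0 ⊆ closedBall 0 1) {M : Set E} (hM : IsCompact M) {y : ℕ → E} {s : ℕ → ℝ}
    (hs : ∀ k, 0 < s k) (hs1 : ∀ᶠ k in atTop, s k ≤ 1)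
    (hMA : M ⊆ kuratowskiLiminf fun k => resc K0 (y k) (s k)) : M ∈ blowupFamily K0 := by
  rcases M.eq_empty_or_nonempty with rfl | ⟨z, hz⟩
  · exact mem_blowupFamily_of_subset_resc hK0 isCompact_empty one_pos le_rfl
      (empty_subset (resc K0 0 1))
  let F (k : ℕ) : Closeds E := ⟨resc K0 (y k) (s k), (hK0.resc _ _).isClosed⟩
  let C := closedBall (0 : E) 2 ×ˢ Icc (0 : ℝ) 1 ×ˢ {G : Closeds E | (G : Set E) ⊆ closedBall 0 1}
  have hC : IsCompact C := (isCompact_closedBall _ _).prod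
    (isCompact_Icc.prod (isCompact_setOf_closeds_subset (isCompact_closedBall _ _)))
  have hev : ∀ᶠ k in atTop, (y k, s k, F k) ∈ C := by
    obtain ⟨q, hqA, -⟩ := hMA hz
    filter_upwards [hqA, hs1] with k hqk hsk
    exact ⟨norm_le_two_of_resc_nonempty hK0sub (hs k) hsk ⟨q k, hqk⟩, ⟨(hs k).le, hsk⟩,
      resc_subset_closedBall _ _ _⟩
  obtain ⟨φ, hφ, hφC⟩ := extraction_of_eventually_atTop hev
  obtain ⟨⟨y₀, s₀, T⟩, ⟨-, -, hT⟩, ψ, hψ, hlim⟩ := hC.tendsto_subseq hφC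
  have hAT : Tendsto (fun n => hausdorffEDist (resc K0 (y (φ (ψ n))) (s (φ (ψ n)))) T)
      atTop (𝓝 0) :=
    tendsto_iff_edist_tendsto_0.1 (((continuous_snd.comp continuous_snd).tendsto _).comp hlim)
  refine ⟨hM, T, y ∘ φ ∘ ψ, s ∘ φ ∘ ψ, y₀, s₀,
    (isCompact_closedBall 0 1).of_isClosed_subset T.isClosed hT, ?_,
    fun n => ⟨hs _, (hφC (ψ n)).2.1.2⟩, ((continuous_fst.tendsto _).comp hlim),
    ((continuous_fst.comp continuous_snd).tendsto _).comp hlim, hAT⟩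
  calc M ⊆ kuratowskiLiminf fun k => resc K0 (y k) (s k) := hMA
    _ ⊆ kuratowskiLiminf ((fun k => resc K0 (y k) (s k)) ∘ φ ∘ ψ) :=
      kuratowskiLiminf_subset_comp _ (hφ.comp hψ).tendsto_atTop
    _ ⊆ T := kuratowskiLiminf_subset_of_tendsto_hausdorffEDist T.isClosed hAT

lemma mem_blowupFamily_of_tendsto_hausdorffEDist (hK0 : IsCompact K0)
    (hK0sub : K0 ⊆ closedBall 0 1) {L : ℕ → Set E} {M : Set E} (hL : ∀ k, L k ∈ blowupFamily K0)
    (hM : IsCompact M) (hLM : Tendsto (fun k => hausdorffEDist (L k) M) atTop (𝓝 0)) :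
    M ∈ blowupFamily K0 := by
  choose Kinf x r _ _ _ hLK hr _ _ hAK using fun k => (hL k).2
  have (k : ℕ) : ∃ j, hausdorffEDist (resc K0 (x k j) (r k j)) (Kinf k) < (k : ℝ≥0∞)⁻¹ :=
    ((hAK k).eventually_lt_const (ENNReal.inv_pos.2 (ENNReal.natCast_ne_top k))).exists
  choose j hj using this
  refine mem_blowupFamily_of_subset_kuratowskiLiminf hK0 hK0sub hM (y := fun k => x k (j k))
    (fun k => (hr k (j k)).1) (Eventually.of_forall fun k => (hr k (j k)).2) fun z hz =>
      mem_kuratowskiLiminf_of_tendsto_infEDist (fun k => hK0.resc _ _) ?_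
  refine tendsto_of_tendsto_of_tendsto_of_le_of_le tendsto_const_nhds
    (by simpa using hLM.add ENNReal.tendsto_inv_nat_nhds_zero) (fun _ => zero_le) fun k => ?_
  calc infEDist z (resc K0 (x k (j k)) (r k (j k)))
      ≤ infEDist z (Kinf k) + hausdorffEDist (Kinf k) (resc K0 (x k (j k)) (r k (j k))) :=
        infEDist_le_infEDist_add_hausdorffEDist
    _ ≤ hausdorffEDist (L k) M + (k : ℝ≥0∞)⁻¹ := by
        gcongr
        · calc infEDist z (Kinf k) ≤ infEDist z (L k) := infEDist_anti (hLK k)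
            _ ≤ hausdorffEDist M (L k) := infEDist_le_hausdorffEDist_of_mem hz
            _ = hausdorffEDist (L k) M := hausdorffEDist_comm
        · exact hausdorffEDist_comm.trans_le (hj k).le

lemma resc_mem_blowupFamily_of_tendsto_zero (hK0 : IsCompact K0)
    (hK0sub : K0 ⊆ closedBall 0 1) {K Kinf : Set E} (hK : IsCompact K) (hKK : K ⊆ Kinf)
    {x : ℕ → E} {r : ℕ → ℝ} (hr : ∀ k, 0 < r k) (hr0 : Tendsto r atTop (𝓝 0))
    (hAK : Tendsto (fun k => hausdorffEDist (resc K0 (x k) (r k)) Kinf) atTop (𝓝 0))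
    (v : E) {ρ : ℝ} (hρ : 0 < ρ) : resc K v ρ ∈ blowupFamily K0 := by
  set η : ℕ → ℝ := fun k => (hausdorffEDist (resc K0 (x k) (r k)) Kinf).toReal
  have hη : Tendsto η atTop (𝓝 0) := by
    have := (ENNReal.tendsto_toReal ENNReal.zero_ne_top).comp hAK
    rwa [ENNReal.toReal_zero] at this
  have hρη (k : ℕ) : 0 < ρ + η k := add_pos_of_pos_of_nonneg hρ ENNReal.toReal_nonneg
  have hs : Tendsto (fun k => r k * (ρ + η k)) atTop (𝓝 0) := by
    simpa using hr0.mul (hη.const_add ρ)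
  refine mem_blowupFamily_of_subset_kuratowskiLiminf hK0 hK0sub (hK.resc v ρ)
    (y := fun k => x k + r k • v)
    (fun k => mul_pos (hr k) (hρη k)) (hs.eventually (ge_mem_nhds one_pos)) ?_
  intro z hz
  rw [mem_resc_iff hρ.ne'] at hz
  have hfin := hAK.eventually_ne ENNReal.zero_ne_top
  obtain ⟨p, hp⟩ := exists_seq_edist_le_hausdorffEDist (fun k => hK0.resc (x k) (r k)) hfin
    (hKK hz.1)
  have hpd : ∀ᶠ k in atTop, p k ∈ resc K0 (x k) (r k) ∧ dist (p k) (v + ρ • z) ≤ η k := by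
    filter_upwards [hp, hfin] with k hpk hk
    exact ⟨hpk.1, by rw [dist_edist]; exact ENNReal.toReal_mono hk hpk.2⟩
  have hpv : Tendsto p atTop (𝓝 (v + ρ • z)) := tendsto_iff_dist_tendsto_zero.2 <|
    squeeze_zero' (Eventually.of_forall fun _ => dist_nonneg) (hpd.mono fun _ => And.right) hη
  refine ⟨fun k => (ρ + η k)⁻¹ • (p k - v), ?_, ?_⟩
  · filter_upwards [hpd] with k ⟨hpA, hpw⟩
    refine resc_resc_subset K0 (hr k).ne' (hρη k).ne' (inv_smul_sub_mem_resc (hρη k) hpA ?_)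
    calc ‖p k - v‖ = ‖(p k - (v + ρ • z)) + ρ • z‖ := by congr 1; abel
      _ ≤ ‖p k - (v + ρ • z)‖ + ‖ρ • z‖ := norm_add_le _ _
      _ ≤ η k + ρ * 1 := by
        rw [← dist_eq_norm, norm_smul, Real.norm_of_nonneg hρ.le]
        gcongr
        exact mem_closedBall_zero_iff.1 hz.2
      _ = ρ + η k := by ring
  · simpa [hρ.ne'] using ((hη.const_add ρ).inv₀ (by simpa using hρ.ne')).smul (hpv.sub_const v)

lemma resc_mem_blowupFamily (hK0 : IsCompact K0) (hK0sub : K0 ⊆ closedBall 0 1) {K : Set E}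
    (hK : K ∈ blowupFamily K0) (v : E) {ρ : ℝ} (hρ : 0 < ρ) (hρ1 : ρ ≤ 1) :
    resc K v ρ ∈ blowupFamily K0 := by
  obtain ⟨hKc, Kinf, x, r, x₀, r₀, -, hKK, hr, hx, hrt, hAK⟩ := hK
  rcases (ge_of_tendsto' hrt fun k => (hr k).1.le).eq_or_lt with rfl | hr₀
  · exact resc_mem_blowupFamily_of_tendsto_zero hK0 hK0sub hKc hKK (fun k => (hr k).1) hrt hAK
      v hρ
  have hKinf : Kinf ⊆ resc K0 x₀ r₀ :=
    (subset_kuratowskiLiminf_of_tendsto_hausdorffEDist (fun k => hK0.resc _ _) hAK).trans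
      (kuratowskiLiminf_resc_subset hK0.isClosed (fun k => (hr k).1.ne') hr₀.ne' hx hrt)
  refine mem_blowupFamily_of_subset_resc hK0 (hKc.resc v ρ) (y := x₀ + r₀ • v) (mul_pos hr₀ hρ)
    (mul_le_one₀ (le_of_tendsto' hrt fun k => (hr k).2) hρ.le hρ1) ?_
  calc resc K v ρ ⊆ resc (resc K0 x₀ r₀) v ρ := resc_mono (hKK.trans hKinf) v ρ
    _ ⊆ resc K0 (x₀ + r₀ • v) (r₀ * ρ) := resc_resc_subset K0 hr₀.ne' hρ.ne'

end BlowupFamily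

/-- The family `𝒞(K⁰)` generated by blow-ups of a compact set `K⁰ ⊆ B̄₁` contains `K⁰`,
is closed under the rescalings `K ↦ ((K - x)/r) ∩ B̄₁` with `x ∈ B̄₁`, `0 < r ≤ 1`, and is
closed under Hausdorff convergence of compact sets. -/
theorem blowupFamily_closed (d : ℕ) (K0 : Set (EuclideanSpace ℝ (Fin d)))
    (hK0 : IsCompact K0) (hK0sub : K0 ⊆ closedBall 0 1) :
    K0 ∈ blowupFamily K0 ∧
    (∀ K ∈ blowupFamily K0, ∀ x ∈ closedBall (0 : EuclideanSpace ℝ (Fin d)) 1,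
      ∀ r : ℝ, 0 < r → r ≤ 1 → resc K x r ∈ blowupFamily K0) ∧
    (∀ (L : ℕ → Set (EuclideanSpace ℝ (Fin d))) (M : Set (EuclideanSpace ℝ (Fin d))),
      (∀ k, L k ∈ blowupFamily K0) → IsCompact M →
      Tendsto (fun k => EMetric.hausdorffEdist (L k) M) atTop (𝓝 0) →
      M ∈ blowupFamily K0) :=
  ⟨mem_blowupFamily_of_subset_resc hK0 hK0 one_pos le_rfl (resc_zero_one hK0sub).ge,
    fun _ hK x _ _ hr hr1 => resc_mem_blowupFamily hK0 hK0sub hK x hr hr1,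
    fun _ _ hL hM hLM => mem_blowupFamily_of_tendsto_hausdorffEDist hK0 hK0sub hL hM hLM⟩
end
end

section
/- Let u : Ω → 𝒜_Q(ℝ^n) be Dir-minimizing on an open set Ω ⊂ ℝ^m with u(y) = Q⟦0⟧ at some y ∈ Ω and frequency I₀ = lim_{r↓0} I_{y,u}(r) ≥ c > 0. Then for all 0 < ρ < r < dist(y,∂Ω), (1/ρ^{m+2c}) ∫_{B_ρ(y)}|u|² ≤ (1/r^{m+2c}) ∫_{B_r(y)}|u|². -/
open MeasureTheory Metric Set Filter Topology
open scoped ENNReal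

noncomputable section

open intervalIntegral in
private theorem aux_integral_rpow {b r : ℝ} (h : -1 < r) :
    ∫ x in (0:ℝ)..b, x ^ r = (b ^ (r + 1) - (0:ℝ) ^ (r + 1)) / (r + 1) :=
  integral_rpow (Or.inl h)

/-- Monotonicity of the normalized `L²`-height for a Dir-minimizing `Q`-valued map `u` with
`u(y) = Q⟦0⟧` and frequency `I₀ = lim_{r↓0} I_{y,u}(r) ≥ c > 0`:
for all `0 < ρ < r < dist(y, ∂Ω)`,
`(1/ρ^{m+2c}) ∫_{B_ρ(y)} |u|² ≤ (1/r^{m+2c}) ∫_{B_r(y)} |u|²`.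
The standard facts for Dir-minimizers (monotonicity of the frequency, the identity
`(d/dr) log(H(r)/r^{m-1}) = 2 I(r)/r`, and the coarea identity) are taken as hypotheses. -/
theorem normalized_height_monotone (m Q n : ℕ)
    (Ω : Set (EuclideanSpace ℝ (Fin m))) (hΩ : IsOpen Ω)
    (y : EuclideanSpace ℝ (Fin m)) (hy : y ∈ Ω)
    (u : EuclideanSpace ℝ (Fin m) → Fin Q → EuclideanSpace ℝ (Fin n))
    (huy : ∀ i, u y i = 0)
    (R : ℝ) (hR : R = Metric.infDist y Ωᶜ) (hRpos : 0 < R)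
    (D H : ℝ → ℝ) (I₀ c : ℝ) (hc : 0 < c) (hI₀ : c ≤ I₀)
    (hH : ∀ r ∈ Set.Ioo (0 : ℝ) R,
      H r = ∫ x in Metric.sphere y r, (∑ i, ‖u x i‖ ^ 2) ∂(μH[(m : ℝ) - 1]))
    (hcoarea : ∀ ρ ∈ Set.Ioo (0 : ℝ) R,
      (∫ x in Metric.ball y ρ, (∑ i, ‖u x i‖ ^ 2)) = ∫ t in (0 : ℝ)..ρ, H t)
    (hHpos : ∀ r ∈ Set.Ioo (0 : ℝ) R, 0 < H r)
    (hmono : MonotoneOn (fun r => r * D r / H r) (Set.Ioo (0 : ℝ) R))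
    (hlim : Tendsto (fun r => r * D r / H r) (𝓝[>] (0 : ℝ)) (𝓝 I₀))
    (hderiv : ∀ r ∈ Set.Ioo (0 : ℝ) R,
      HasDerivAt (fun s => Real.log (H s / s ^ ((m : ℝ) - 1)))
        (2 * (r * D r / H r) / r) r) :
    ∀ ρ r : ℝ, 0 < ρ → ρ < r → r < R →
      (1 / ρ ^ ((m : ℝ) + 2 * c)) * ∫ x in Metric.ball y ρ, (∑ i, ‖u x i‖ ^ 2) ≤
        (1 / r ^ ((m : ℝ) + 2 * c)) * ∫ x in Metric.ball y r, (∑ i, ‖u x i‖ ^ 2) := by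
  intro ρ r hρ hρr hrR
  have hrpos : 0 < r := hρ.trans hρr
  have hρR : ρ < R := hρr.trans hrR
  set α : ℝ := (m : ℝ) - 1 + 2 * c with hα
  set β : ℝ := (m : ℝ) + 2 * c with hβ
  have hm0 : (0:ℝ) ≤ (m:ℝ) := Nat.cast_nonneg m
  have hβpos : 0 < β := by rw [hβ]; linarith
  have hαβ : α + 1 = β := by rw [hα, hβ]; ring
  have hα1 : (-1:ℝ) < α := by linarith
  -- Step 1: frequency is at least c on (0, R)
  have hIc : ∀ s ∈ Set.Ioo (0:ℝ) R, c ≤ s * D s / H s := by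
    intro s hs
    have h1 : I₀ ≤ s * D s / H s := by
      refine le_of_tendsto hlim ?_
      filter_upwards [Ioo_mem_nhdsGT_of_mem ⟨le_refl (0:ℝ), hs.1⟩] with t ht
      exact hmono ⟨ht.1, ht.2.trans hs.2⟩ hs ht.2.le
    linarith
  -- continuity of H on (0, R)
  have hHcont : ∀ s ∈ Set.Ioo (0:ℝ) R, ContinuousAt H s := by
    intro s hs
    have hL : ContinuousAt (fun t => Real.log (H t / t ^ ((m:ℝ)-1))) s :=
      (hderiv s hs).continuousAt
    have hcont : ContinuousAt
        (fun t => Real.exp (Real.log (H t / t ^ ((m:ℝ)-1))) * t ^ ((m:ℝ)-1)) s :=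
      (Real.continuous_exp.continuousAt.comp hL).mul
        (Real.continuousAt_rpow_const s ((m:ℝ)-1) (Or.inl (ne_of_gt hs.1)))
    refine hcont.congr ?_
    filter_upwards [isOpen_Ioo.mem_nhds hs] with t ht
    have htp : (0:ℝ) < t ^ ((m:ℝ)-1) := Real.rpow_pos_of_pos ht.1 _
    rw [Real.exp_log (div_pos (hHpos t ht) htp), div_mul_cancel₀]
    exact ne_of_gt htp
  -- Step 2: φ := log(H t / t^{m-1}) - 2c log t is monotone on (0,R)
  have hφderiv : ∀ s ∈ Set.Ioo (0:ℝ) R,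
      HasDerivAt (fun t => Real.log (H t / t ^ ((m:ℝ)-1)) - 2*c*Real.log t)
        (2 * (s * D s / H s) / s - 2*c*s⁻¹) s := by
    intro s hs
    exact (hderiv s hs).sub ((Real.hasDerivAt_log (ne_of_gt hs.1)).const_mul (2*c))
  have hφmono : MonotoneOn (fun t => Real.log (H t / t ^ ((m:ℝ)-1)) - 2*c*Real.log t)
      (Set.Ioo (0:ℝ) R) := by
    refine monotoneOn_of_deriv_nonneg (convex_Ioo 0 R) ?_ ?_ ?_
    · intro s hs; exact (hφderiv s hs).continuousAt.continuousWithinAt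
    · rw [interior_Ioo]
      intro s hs; exact (hφderiv s hs).differentiableAt.differentiableWithinAt
    · rw [interior_Ioo]
      intro s hs
      rw [(hφderiv s hs).deriv]
      have h1 := hIc s hs
      have h2 : 2*c*s⁻¹ ≤ 2 * (s * D s / H s) / s := by
        rw [mul_comm (2*c) s⁻¹, div_eq_mul_inv, mul_comm _ s⁻¹]
        have := inv_pos.mpr hs.1
        nlinarith
      linarith
  -- Comparison between H values
  have hHcomp : ∀ t ∈ Set.Ioo (0:ℝ) R, ∀ s ∈ Set.Ioo (0:ℝ) R, t ≤ s →
      H t * s ^ α ≤ H s * t ^ α := by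
    intro t ht s hs hts
    have h1 := hφmono ht hs hts
    dsimp only at h1
    have hlg : ∀ x, x ∈ Set.Ioo (0:ℝ) R →
        Real.log (H x / x ^ ((m:ℝ)-1)) - 2*c*Real.log x
          = Real.log (H x) - α * Real.log x := by
      intro x hx
      rw [Real.log_div (ne_of_gt (hHpos x hx)) (ne_of_gt (Real.rpow_pos_of_pos hx.1 _)),
        Real.log_rpow hx.1, hα]
      ring
    rw [hlg t ht, hlg s hs] at h1
    have h2 : Real.log (H t * s ^ α) ≤ Real.log (H s * t ^ α) := by
      rw [Real.log_mul (ne_of_gt (hHpos t ht)) (ne_of_gt (Real.rpow_pos_of_pos hs.1 _)),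
        Real.log_mul (ne_of_gt (hHpos s hs)) (ne_of_gt (Real.rpow_pos_of_pos ht.1 _)),
        Real.log_rpow hs.1, Real.log_rpow ht.1]
      linarith
    have h3 := Real.exp_le_exp.mpr h2
    rwa [Real.exp_log (mul_pos (hHpos t ht) (Real.rpow_pos_of_pos hs.1 _)),
      Real.exp_log (mul_pos (hHpos s hs) (Real.rpow_pos_of_pos ht.1 _))] at h3
  -- pointwise bound H t ≤ (H s / s^α) * t^α for 0 < t ≤ s < R
  have hHbd : ∀ s ∈ Set.Ioo (0:ℝ) R, ∀ t ∈ Set.Ioc (0:ℝ) s,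
      H t ≤ H s / s ^ α * t ^ α := by
    intro s hs t ht
    have htR : t ∈ Set.Ioo (0:ℝ) R := ⟨ht.1, lt_of_le_of_lt ht.2 hs.2⟩
    have hsα : (0:ℝ) < s ^ α := Real.rpow_pos_of_pos hs.1 _
    have := hHcomp t htR s hs ht.2
    rw [div_mul_eq_mul_div, le_div_iff₀ hsα]
    linarith
  -- integrability of the comparison function
  have hKint : ∀ s : ℝ, IntegrableOn (fun t => H s / s ^ α * t ^ α) (Set.Ioc 0 s) := by
    intro s
    exact ((intervalIntegral.intervalIntegrable_rpow' hα1 (a := 0) (b := s)).const_mul (H s / s ^ α)).1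
  -- integrability of H
  have hint : ∀ s ∈ Set.Ioo (0:ℝ) R, IntegrableOn H (Set.Ioc 0 s) := by
    intro s hs
    have hmeas : AEStronglyMeasurable H (volume.restrict (Set.Ioc 0 s)) := by
      have hco : ContinuousOn H (Set.Ioc 0 s) := fun t ht =>
        (hHcont t ⟨ht.1, lt_of_le_of_lt ht.2 hs.2⟩).continuousWithinAt
      exact hco.aestronglyMeasurable measurableSet_Ioc
    refine Integrable.mono' (hKint s) hmeas ?_
    filter_upwards [ae_restrict_mem measurableSet_Ioc] with t ht
    have htR : t ∈ Set.Ioo (0:ℝ) R := ⟨ht.1, lt_of_le_of_lt ht.2 hs.2⟩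
    rw [Real.norm_of_nonneg (hHpos t htR).le]
    exact hHbd s hs t ht
  have hii : ∀ s ∈ Set.Ioo (0:ℝ) R, IntervalIntegrable H volume 0 s := by
    intro s hs
    rw [intervalIntegrable_iff_integrableOn_Ioc_of_le hs.1.le]
    exact hint s hs
  -- FTC derivative of the primitive
  have hHcontOn : ContinuousOn H (Set.Ioo (0:ℝ) R) := fun t ht =>
    (hHcont t ht).continuousWithinAt
  have hgderiv : ∀ x ∈ Set.Ioo (0:ℝ) R,
      HasDerivAt (fun s => ∫ t in (0:ℝ)..s, H t) (H x) x := by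
    intro x hx
    exact intervalIntegral.integral_hasDerivAt_right (hii x hx)
      (hHcontOn.stronglyMeasurableAtFilter isOpen_Ioo x hx) (hHcont x hx)
  -- key integral bound: β ∫₀ˣ H ≤ x H(x)
  have hgle : ∀ x ∈ Set.Ioo (0:ℝ) R, β * (∫ t in (0:ℝ)..x, H t) ≤ x * H x := by
    intro x hx
    have hxα : (0:ℝ) < x ^ α := Real.rpow_pos_of_pos hx.1 _
    have h1 : (∫ t in (0:ℝ)..x, H t) ≤ ∫ t in (0:ℝ)..x, H x / x ^ α * t ^ α := by
      rw [intervalIntegral.integral_of_le hx.1.le, intervalIntegral.integral_of_le hx.1.le]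
      exact setIntegral_mono_on (hint x hx) (hKint x) measurableSet_Ioc (hHbd x hx)
    have h2 : (∫ t in (0:ℝ)..x, H x / x ^ α * t ^ α) = x * H x / β := by
      have hx1 : x ^ (α + 1) = x ^ α * x := by
        rw [Real.rpow_add hx.1, Real.rpow_one]
      have hz : (0:ℝ) ^ (α + 1) = 0 := Real.zero_rpow (by linarith)
      have hrp := aux_integral_rpow (b := x) hα1
      rw [hz, sub_zero] at hrp
      rw [intervalIntegral.integral_const_mul, hrp, hx1, hαβ]
      field_simp
    rw [mul_comm β]
    rw [h2] at h1
    calc (∫ t in (0:ℝ)..x, H t) * β ≤ (x * H x / β) * β := by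
          exact mul_le_mul_of_nonneg_right h1 hβpos.le
      _ = x * H x := by field_simp
  -- the normalized primitive is monotone
  have hψmono : MonotoneOn (fun x => (∫ t in (0:ℝ)..x, H t) * x ^ (-β))
      (Set.Ioo (0:ℝ) R) := by
    have hψderiv : ∀ x ∈ Set.Ioo (0:ℝ) R,
        HasDerivAt (fun x => (∫ t in (0:ℝ)..x, H t) * x ^ (-β))
          (H x * x ^ (-β) + (∫ t in (0:ℝ)..x, H t) * (-β * x ^ (-β - 1))) x := by
      intro x hx
      exact (hgderiv x hx).mul (Real.hasDerivAt_rpow_const (Or.inl (ne_of_gt hx.1)))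
    refine monotoneOn_of_deriv_nonneg (convex_Ioo 0 R) ?_ ?_ ?_
    · intro x hx; exact (hψderiv x hx).continuousAt.continuousWithinAt
    · rw [interior_Ioo]
      intro x hx; exact (hψderiv x hx).differentiableAt.differentiableWithinAt
    · rw [interior_Ioo]
      intro x hx
      rw [(hψderiv x hx).deriv]
      have hxe : x * x ^ (-β - 1) = x ^ (-β) := by
        rw [show -β - 1 = -β + (-1) by ring, Real.rpow_add hx.1, Real.rpow_neg_one]
        field_simp [ne_of_gt hx.1]
      have hxp : (0:ℝ) ≤ x ^ (-β - 1) := (Real.rpow_pos_of_pos hx.1 _).le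
      have h3 : β * (∫ t in (0:ℝ)..x, H t) * x ^ (-β - 1) ≤ (x * H x) * x ^ (-β - 1) :=
        mul_le_mul_of_nonneg_right (hgle x hx) hxp
      have h4 : (x * H x) * x ^ (-β - 1) = H x * x ^ (-β) := by
        rw [mul_comm x (H x), mul_assoc, hxe]
      nlinarith [h3, h4]
  -- conclusion
  have hρm : ρ ∈ Set.Ioo (0:ℝ) R := ⟨hρ, hρR⟩
  have hrm : r ∈ Set.Ioo (0:ℝ) R := ⟨hrpos, hrR⟩
  have key := hψmono hρm hrm hρr.le
  simp only at key
  rw [hcoarea ρ hρm, hcoarea r hrm, one_div, one_div,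
    ← Real.rpow_neg hρ.le, ← Real.rpow_neg hrpos.le]
  calc ρ ^ (-β) * ∫ t in (0:ℝ)..ρ, H t = (∫ t in (0:ℝ)..ρ, H t) * ρ ^ (-β) := mul_comm _ _
    _ ≤ (∫ t in (0:ℝ)..r, H t) * r ^ (-β) := key
    _ = r ^ (-β) * ∫ t in (0:ℝ)..r, H t := mul_comm _ _
end
end
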